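/- arXiv:2210.06842 — 12 statements merged into one kernel-verified Lean document; each statement's English description precedes it below -/
import Mathlib

section
/- Let C be a d-copula and let L : [0,∞)^d → [0,∞) be positively homogeneous of order 1 (i.e. L(sw) = s·L(w) for all s > 0 and w ∈ [0,∞)^d). Then the following are equivalent: (1) the tail dependence function Λ(w; C) = lim_{s↓0} C(sw)/s exists for every w ∈ [0,∞)^d and equals L(w); (2) C admits the uniform lower tail expansion C(u) = L(u) + R(u)·(u_1 + … + u_d) for all u ∈ [0,1]^d, where R : [0,1]^d → ℝ is a bounded function with R(u) → 0 as u_1 + … + u_d → 0. -/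
open Filter Set

/-- A `d`-copula: grounded, uniform margins, and `d`-increasing. -/
def IsCopula {d : ℕ} (C : (Fin d → ℝ) → ℝ) : Prop :=
  (∀ u : Fin d → ℝ, (∀ k, u k ∈ Icc (0:ℝ) 1) → C u ∈ Icc (0:ℝ) 1) ∧
  (∀ u : Fin d → ℝ, (∀ k, u k ∈ Icc (0:ℝ) 1) → (∃ k, u k = 0) → C u = 0) ∧
  (∀ u : Fin d → ℝ, (∀ k, u k ∈ Icc (0:ℝ) 1) → ∀ k, (∀ l, l ≠ k → u l = 1) → C u = u k) ∧
  (∀ a b : Fin d → ℝ, (∀ k, 0 ≤ a k) → (∀ k, a k ≤ b k) → (∀ k, b k ≤ 1) →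
    0 ≤ ∑ v : Fin d → Bool,
      (-1 : ℝ) ^ (Finset.univ.filter fun k => v k = false).card *
        C (fun k => if v k then b k else a k))

/-- The tail dependence function `Λ(w; C) = lim_{s↓0} C(sw)/s` exists for all `w ∈ [0,∞)^d`
and equals `Λ`. -/
def HasTDF {d : ℕ} (C : (Fin d → ℝ) → ℝ) (Λ : (Fin d → ℝ) → ℝ) : Prop :=
  ∀ w : Fin d → ℝ, (∀ k, 0 ≤ w k) →
    Tendsto (fun s : ℝ => C (fun k => s * w k) / s) (nhdsWithin 0 (Ioi 0)) (nhds (Λ w))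

namespace Stmt0Aux

variable {d : ℕ} {C : (Fin d → ℝ) → ℝ}

lemma cube_update {u : Fin d → ℝ} (hu : ∀ m, u m ∈ Icc (0:ℝ) 1) (k : Fin d)
    {a : ℝ} (ha : a ∈ Icc (0:ℝ) 1) : ∀ m, Function.update u k a m ∈ Icc (0:ℝ) 1 := by
  intro m
  rcases eq_or_ne m k with h | h
  · subst h; simpa using ha
  · simpa [Function.update_apply, h] using hu m

lemma mono_update (hC : IsCopula C)
    {u : Fin d → ℝ} (hu : ∀ m, u m ∈ Icc (0:ℝ) 1) (k : Fin d)
    {a b : ℝ} (ha : 0 ≤ a) (hab : a ≤ b) (hb1 : b ≤ 1) :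
    C (Function.update u k a) ≤ C (Function.update u k b) := by
  classical
  set A : Fin d → ℝ := fun m => if m = k then a else 0 with hA
  set B : Fin d → ℝ := fun m => if m = k then b else u m with hB
  have key := hC.2.2.2 A B
    (fun m => by by_cases h : m = k <;> simp [hA, h, ha])
    (fun m => by by_cases h : m = k <;> simp [hA, hB, h, hab, (hu m).1])
    (fun m => by by_cases h : m = k <;> simp [hB, h, hb1, (hu m).2])
  set f : (Fin d → Bool) → ℝ := fun v =>
    (-1 : ℝ) ^ (Finset.univ.filter fun m => v m = false).card *
      C (fun m => if v m then B m else A m) with hf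
  have key' : (0:ℝ) ≤ ∑ v : Fin d → Bool, f v := key
  have hcube : ∀ v : Fin d → Bool, ∀ m, (if v m then B m else A m) ∈ Icc (0:ℝ) 1 := by
    intro v m
    have hb0 : 0 ≤ b := ha.trans hab
    by_cases h : m = k <;> cases hvm : v m <;>
      simp [hA, hB, h, ha, hb0, hb1, hab.trans hb1, hu m]
  set vT : Fin d → Bool := fun _ => true with hvT
  set vF : Fin d → Bool := Function.update vT k false with hvF
  have hne : vT ≠ vF := by
    intro h
    have := congrFun h k
    simp [hvT, hvF] at this
  have hzero : ∀ v : Fin d → Bool, v ∉ ({vT, vF} : Finset (Fin d → Bool)) → f v = 0 := by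
    intro v hv
    simp only [Finset.mem_insert, Finset.mem_singleton] at hv
    push_neg at hv
    have hex : ∃ m, m ≠ k ∧ v m = false := by
      by_contra hcon
      push_neg at hcon
      have hall : ∀ m, m ≠ k → v m = true := by
        intro m hm
        cases h : v m
        · exact absurd h (hcon m hm)
        · rfl
      rcases Bool.eq_false_or_eq_true (v k) with hk | hk
      · refine hv.1 (funext fun j => ?_)
        by_cases h : j = k
        · rw [h, hk]
        · simp [hvT, hall j h]
      · refine hv.2 (funext fun j => ?_)
        by_cases h : j = k
        · rw [h, hk]; simp [hvF, hvT]
        · simp [hvF, hvT, Function.update_apply, h, hall j h]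
    obtain ⟨m, hmk, hvm⟩ := hex
    have : C (fun m => if v m then B m else A m) = 0 := by
      refine hC.2.1 _ (hcube v) ⟨m, ?_⟩
      simp [hvm, hA, hmk]
    simp [hf, this]
  have hsum : ∑ v : Fin d → Bool, f v = f vT + f vF := by
    rw [← Finset.sum_pair hne]
    exact (Finset.sum_subset (Finset.subset_univ _) (fun v _ hv => hzero v hv)).symm
  have hfT : f vT = C (Function.update u k b) := by
    have h1 : (Finset.univ.filter fun m => vT m = false) = ∅ := by
      ext m; simp [hvT]
    have h2 : (fun m => if vT m then B m else A m) = Function.update u k b := by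
      funext m; by_cases h : m = k <;> simp [hvT, hB, Function.update_apply, h]
    rw [hf]; dsimp only; rw [h1, h2]; simp
  have hfF : f vF = - C (Function.update u k a) := by
    have h1 : (Finset.univ.filter fun m => vF m = false) = {k} := by
      ext m; by_cases h : m = k <;> simp [hvF, hvT, Function.update_apply, h]
    have h2 : (fun m => if vF m then B m else A m) = Function.update u k a := by
      funext m; by_cases h : m = k <;>
        simp [hvF, hvT, hA, hB, Function.update_apply, h]
    rw [hf]; dsimp only; rw [h1, h2]; simp
  rw [hsum, hfT, hfF] at key'
  linarith

lemma box4 (hC : IsCopula C) {u : Fin d → ℝ} (hu : ∀ m, u m ∈ Icc (0:ℝ) 1)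
    {k l : Fin d} (hkl : k ≠ l)
    {a b x y : ℝ} (ha : 0 ≤ a) (hab : a ≤ b) (hb : b ≤ 1)
    (hx : 0 ≤ x) (hxy : x ≤ y) (hy : y ≤ 1) :
    C (Function.update (Function.update u k b) l x)
      - C (Function.update (Function.update u k a) l x)
    ≤ C (Function.update (Function.update u k b) l y)
      - C (Function.update (Function.update u k a) l y) := by
  classical
  set A : Fin d → ℝ := fun m => if m = k then a else if m = l then x else 0 with hA
  set B : Fin d → ℝ := fun m => if m = k then b else if m = l then y else u m with hB
  have key := hC.2.2.2 A B
    (fun m => by by_cases h1 : m = k <;> by_cases h2 : m = l <;> simp [hA, h1, h2, ha, hx, hkl, hkl.symm])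
    (fun m => by
      by_cases h1 : m = k <;> by_cases h2 : m = l <;>
        simp [hA, hB, h1, h2, hab, hxy, (hu m).1, hkl, hkl.symm])
    (fun m => by
      by_cases h1 : m = k <;> by_cases h2 : m = l <;> simp [hB, h1, h2, hb, hy, (hu m).2, hkl, hkl.symm])
  set f : (Fin d → Bool) → ℝ := fun v =>
    (-1 : ℝ) ^ (Finset.univ.filter fun m => v m = false).card *
      C (fun m => if v m then B m else A m) with hf
  have key' : (0:ℝ) ≤ ∑ v : Fin d → Bool, f v := key
  have hb0 : 0 ≤ b := ha.trans hab
  have hy0 : 0 ≤ y := hx.trans hxy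
  have hcube : ∀ v : Fin d → Bool, ∀ m, (if v m then B m else A m) ∈ Icc (0:ℝ) 1 := by
    intro v m
    by_cases h1 : m = k <;> by_cases h2 : m = l <;> cases hvm : v m <;>
      simp [hA, hB, h1, h2, ha, hb0, hb, hab.trans hb, hx, hy0, hy, hxy.trans hy, hu m, hkl, hkl.symm]
  set w : Bool → Bool → (Fin d → Bool) :=
    fun p q => fun m => if m = k then p else if m = l then q else true with hw
  have hwk : ∀ p q, w p q k = p := fun p q => by simp [hw]
  have hwl : ∀ p q, w p q l = q := fun p q => by simp [hw, hkl.symm]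
  have hne : ∀ p q p' q' : Bool, w p q = w p' q' → p = p' ∧ q = q' := by
    intro p q p' q' h
    constructor
    · rw [← hwk p q, h, hwk]
    · rw [← hwl p q, h, hwl]
  have hzero : ∀ v : Fin d → Bool,
      v ∉ ({w true true, w false true, w true false, w false false} :
        Finset (Fin d → Bool)) → f v = 0 := by
    intro v hv
    have hex : ∃ m, m ≠ k ∧ m ≠ l ∧ v m = false := by
      by_contra hcon
      push_neg at hcon
      have hall : ∀ m, m ≠ k → m ≠ l → v m = true := by
        intro m h1 h2
        cases h : v m
        · exact absurd h (hcon m h1 h2)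
        · rfl
      have hveq : v = w (v k) (v l) := by
        funext j
        by_cases h1 : j = k
        · rw [h1, hwk]
        · by_cases h2 : j = l
          · rw [h2, hwl]
          · simp [hw, h1, h2, hall j h1 h2]
      apply hv
      rw [hveq]
      cases hk : v k <;> cases hl : v l <;> simp [Finset.mem_insert]
    obtain ⟨m, hmk, hml, hvm⟩ := hex
    have hCz : C (fun m => if v m then B m else A m) = 0 := by
      refine hC.2.1 _ (hcube v) ⟨m, ?_⟩
      simp [hvm, hA, hmk, hml]
    simp [hf, hCz]
  have h11 : w true true ∉ ({w false true, w true false, w false false} :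
      Finset (Fin d → Bool)) := by
    simp only [Finset.mem_insert, Finset.mem_singleton]
    push_neg
    refine ⟨fun h => ?_, fun h => ?_, fun h => ?_⟩ <;> simpa using hne _ _ _ _ h
  have h01 : w false true ∉ ({w true false, w false false} : Finset (Fin d → Bool)) := by
    simp only [Finset.mem_insert, Finset.mem_singleton]
    push_neg
    refine ⟨fun h => ?_, fun h => ?_⟩ <;> simpa using hne _ _ _ _ h
  have hpair : w true false ≠ w false false := fun h => by simpa using hne _ _ _ _ h
  have hsum : ∑ v : Fin d → Bool, f v
      = f (w true true) + (f (w false true) + (f (w true false) + f (w false false))) := by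
    rw [← Finset.sum_pair hpair, ← Finset.sum_insert h01, ← Finset.sum_insert h11]
    exact (Finset.sum_subset (Finset.subset_univ _) (fun v _ hv => hzero v hv)).symm
  have hpoint : ∀ p q : Bool,
      (fun m => if w p q m then B m else A m)
        = Function.update (Function.update u k (if p then b else a)) l (if q then y else x) := by
    intro p q
    funext m
    by_cases h1 : m = k
    · by_cases h2 : m = l
      · exact absurd (h1.symm.trans h2) hkl
      · cases p <;> cases q <;>
          simp [hw, hA, hB, Function.update_apply, h1, h2, hkl]
    · by_cases h2 : m = l
      · cases p <;> cases q <;>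
          simp [hw, hA, hB, Function.update_apply, h1, h2, hkl.symm]
      · cases p <;> cases q <;>
          simp [hw, hA, hB, Function.update_apply, h1, h2]
  have hc11 : (Finset.univ.filter fun m => w true true m = false) = ∅ := by
    ext m; by_cases h1 : m = k <;> by_cases h2 : m = l <;> simp [hw, h1, h2, hkl, hkl.symm]
  have hc01 : (Finset.univ.filter fun m => w false true m = false) = {k} := by
    ext m; by_cases h1 : m = k <;> by_cases h2 : m = l <;> simp [hw, h1, h2, hkl, hkl.symm]
  have hc10 : (Finset.univ.filter fun m => w true false m = false) = {l} := by
    ext m; by_cases h1 : m = k <;> by_cases h2 : m = l <;> simp [hw, h1, h2, hkl, hkl.symm]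
  have hc00 : (Finset.univ.filter fun m => w false false m = false) = {k, l} := by
    ext m; by_cases h1 : m = k <;> by_cases h2 : m = l <;> simp [hw, h1, h2, hkl, hkl.symm]
  have hf11 : f (w true true) = C (Function.update (Function.update u k b) l y) := by
    rw [hf]; dsimp only; rw [hc11, hpoint true true]; simp
  have hf01 : f (w false true) = - C (Function.update (Function.update u k a) l y) := by
    rw [hf]; dsimp only; rw [hc01, hpoint false true]; simp
  have hf10 : f (w true false) = - C (Function.update (Function.update u k b) l x) := by
    rw [hf]; dsimp only; rw [hc10, hpoint true false]; simp
  have hf00 : f (w false false) = C (Function.update (Function.update u k a) l x) := by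
    rw [hf]; dsimp only; rw [hc00, hpoint false false, Finset.card_pair hkl]; simp
  rw [hsum, hf11, hf01, hf10, hf00] at key'
  linarith

lemma single_lip_upper (hC : IsCopula C) {x : Fin d → ℝ} (hx : ∀ m, x m ∈ Icc (0:ℝ) 1)
    (k : Fin d) {a b : ℝ} (ha : 0 ≤ a) (hab : a ≤ b) (hb : b ≤ 1) :
    C (Function.update x k b) - C (Function.update x k a) ≤ b - a := by
  classical
  have main : ∀ S : Finset (Fin d), k ∉ S →
      C (Function.update (fun m => if m ∈ S then x m else (1:ℝ)) k b)
        - C (Function.update (fun m => if m ∈ S then x m else (1:ℝ)) k a) ≤ b - a := by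
    intro S
    induction S using Finset.induction_on with
    | empty =>
      intro _
      have hone : (fun m : Fin d => if m ∈ (∅ : Finset (Fin d)) then x m else (1:ℝ))
          = fun _ => (1:ℝ) := by funext m; simp
      rw [hone]
      have hcb : ∀ m, Function.update (fun _ : Fin d => (1:ℝ)) k b m ∈ Icc (0:ℝ) 1 :=
        cube_update (fun m => by simp) k ⟨ha.trans hab, hb⟩
      have hca : ∀ m, Function.update (fun _ : Fin d => (1:ℝ)) k a m ∈ Icc (0:ℝ) 1 :=
        cube_update (fun m => by simp) k ⟨ha, hab.trans hb⟩
      have h1 : C (Function.update (fun _ : Fin d => (1:ℝ)) k b) = b := by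
        have := hC.2.2.1 _ hcb k (fun l hl => by simp [Function.update_apply, hl])
        simpa using this
      have h2 : C (Function.update (fun _ : Fin d => (1:ℝ)) k a) = a := by
        have := hC.2.2.1 _ hca k (fun l hl => by simp [Function.update_apply, hl])
        simpa using this
      rw [h1, h2]
    | @insert l S hlS ih =>
      intro hk
      have hlk : l ≠ k := fun h => hk (by simp [h])
      have hkS : k ∉ S := fun h => hk (Finset.mem_insert_of_mem h)
      have hmask : (fun m : Fin d => if m ∈ insert l S then x m else (1:ℝ))
          = Function.update (fun m => if m ∈ S then x m else (1:ℝ)) l (x l) := by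
        funext m
        by_cases h : m = l
        · subst h; simp
        · simp [Function.update_apply, h, Finset.mem_insert]
      have hmaskS : ∀ m, (if m ∈ S then x m else (1:ℝ)) ∈ Icc (0:ℝ) 1 := by
        intro m; by_cases h : m ∈ S <;> simp [h, hx m]
      have hSl : (fun m : Fin d => if m ∈ S then x m else (1:ℝ))
          = Function.update (fun m => if m ∈ S then x m else (1:ℝ)) l (1:ℝ) := by
        funext m
        by_cases h : m = l
        · subst h; simp [hlS]
        · simp [Function.update_apply, h]
      have hbox := box4 hC hmaskS hlk.symm ha hab hb (hx l).1 (hx l).2 le_rfl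
      rw [hmask]
      calc C (Function.update (Function.update (fun m => if m ∈ S then x m else (1:ℝ)) l (x l)) k b)
            - C (Function.update (Function.update (fun m => if m ∈ S then x m else (1:ℝ)) l (x l)) k a)
          = C (Function.update (Function.update (fun m => if m ∈ S then x m else (1:ℝ)) k b) l (x l))
            - C (Function.update (Function.update (fun m => if m ∈ S then x m else (1:ℝ)) k a) l (x l)) := by
            rw [Function.update_comm hlk, Function.update_comm hlk]
        _ ≤ C (Function.update (Function.update (fun m => if m ∈ S then x m else (1:ℝ)) k b) l 1)
            - C (Function.update (Function.update (fun m => if m ∈ S then x m else (1:ℝ)) k a) l 1) := hbox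
        _ = C (Function.update (fun m => if m ∈ S then x m else (1:ℝ)) k b)
            - C (Function.update (fun m => if m ∈ S then x m else (1:ℝ)) k a) := by
            rw [Function.update_comm hlk.symm, Function.update_comm hlk.symm, ← hSl]
        _ ≤ b - a := ih hkS
  have hfin := main (Finset.univ.erase k) (Finset.notMem_erase k Finset.univ)
  have heq : ∀ t : ℝ, Function.update (fun m => if m ∈ Finset.univ.erase k then x m else (1:ℝ)) k t
      = Function.update x k t := by
    intro t
    funext m
    by_cases h : m = k
    · subst h; simp
    · simp [Function.update_apply, h, Finset.mem_erase]
  rwa [heq, heq] at hfin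

lemma single_lip (hC : IsCopula C) {x : Fin d → ℝ} (hx : ∀ m, x m ∈ Icc (0:ℝ) 1)
    (k : Fin d) {s t : ℝ} (hs : s ∈ Icc (0:ℝ) 1) (ht : t ∈ Icc (0:ℝ) 1) :
    |C (Function.update x k s) - C (Function.update x k t)| ≤ |s - t| := by
  rcases le_total s t with h | h
  · have h1 := mono_update hC hx k hs.1 h ht.2
    have h2 := single_lip_upper hC hx k hs.1 h ht.2
    rw [abs_sub_comm, abs_of_nonneg (by linarith), abs_of_nonpos (by linarith)]
    linarith
  · have h1 := mono_update hC hx k ht.1 h hs.2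
    have h2 := single_lip_upper hC hx k ht.1 h hs.2
    rw [abs_of_nonneg (by linarith), abs_of_nonneg (by linarith)]
    linarith

lemma copula_lip (hC : IsCopula C) {u v : Fin d → ℝ}
    (hu : ∀ m, u m ∈ Icc (0:ℝ) 1) (hv : ∀ m, v m ∈ Icc (0:ℝ) 1) :
    |C u - C v| ≤ ∑ m, |u m - v m| := by
  classical
  have main : ∀ S : Finset (Fin d),
      |C (fun m => if m ∈ S then v m else u m) - C u| ≤ ∑ m ∈ S, |v m - u m| := by
    intro S
    induction S using Finset.induction_on with
    | empty => simp
    | @insert l S hlS ih =>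
      have hhyb : ∀ m, (if m ∈ S then v m else u m) ∈ Icc (0:ℝ) 1 := by
        intro m; by_cases h : m ∈ S <;> simp [h, hu m, hv m]
      have h1 : (fun m => if m ∈ insert l S then v m else u m)
          = Function.update (fun m => if m ∈ S then v m else u m) l (v l) := by
        funext m
        by_cases h : m = l
        · subst h; simp
        · simp [Function.update_apply, h, Finset.mem_insert]
      have h2 : (fun m => if m ∈ S then v m else u m)
          = Function.update (fun m => if m ∈ S then v m else u m) l (u l) := by
        funext m
        by_cases h : m = l
        · subst h; simp [hlS]
        · simp [Function.update_apply, h]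
      have h3 := single_lip hC hhyb l (hv l) (hu l)
      rw [← h2] at h3
      calc |C (fun m => if m ∈ insert l S then v m else u m) - C u|
          ≤ |C (fun m => if m ∈ insert l S then v m else u m)
              - C (fun m => if m ∈ S then v m else u m)|
            + |C (fun m => if m ∈ S then v m else u m) - C u| := abs_sub_le _ _ _
        _ ≤ |v l - u l| + ∑ m ∈ S, |v m - u m| := by
            rw [h1]
            exact add_le_add h3 ih
        _ = ∑ m ∈ insert l S, |v m - u m| := (Finset.sum_insert (f := fun m => |v m - u m|) hlS).symm
  have hfin := main Finset.univ
  have : (fun m => if m ∈ Finset.univ then v m else u m) = v := by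
    funext m; simp
  rw [this] at hfin
  rw [abs_sub_comm]
  refine hfin.trans (le_of_eq ?_)
  exact Finset.sum_congr rfl fun m _ => abs_sub_comm _ _

lemma C_nonneg (hC : IsCopula C) {u : Fin d → ℝ} (hu : ∀ m, u m ∈ Icc (0:ℝ) 1) :
    0 ≤ C u := (hC.1 u hu).1

lemma C_le_sum (hd : 0 < d) (hC : IsCopula C) {u : Fin d → ℝ}
    (hu : ∀ m, u m ∈ Icc (0:ℝ) 1) : C u ≤ ∑ m, u m := by
  have h0 : C (fun _ => (0:ℝ)) = 0 :=
    hC.2.1 _ (fun m => by simp) ⟨⟨0, hd⟩, rfl⟩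
  have hlip := copula_lip hC hu (fun m => by simp : ∀ m, (fun _ => (0:ℝ)) m ∈ Icc (0:ℝ) 1)
  rw [h0, sub_zero] at hlip
  calc C u ≤ |C u| := le_abs_self _
    _ ≤ ∑ m, |u m - 0| := hlip
    _ = ∑ m, u m := Finset.sum_congr rfl fun m _ => by
        rw [sub_zero, abs_of_nonneg (hu m).1]

lemma scaled_cube {u : Fin d → ℝ} (hu : ∀ m, u m ∈ Icc (0:ℝ) 1) {s : ℝ}
    (hs0 : 0 ≤ s) (hs1 : s ≤ 1) : ∀ m, (s * u m) ∈ Icc (0:ℝ) 1 := by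
  intro m
  constructor
  · exact mul_nonneg hs0 (hu m).1
  · calc s * u m ≤ 1 * 1 := mul_le_mul hs1 (hu m).2 (hu m).1 zero_le_one
      _ = 1 := by ring

lemma g_lip (hd : 0 < d) (hC : IsCopula C) {u v : Fin d → ℝ}
    (hu : ∀ m, u m ∈ Icc (0:ℝ) 1) (hv : ∀ m, v m ∈ Icc (0:ℝ) 1)
    {s : ℝ} (hs0 : 0 < s) (hs1 : s ≤ 1) :
    |C (fun k => s * u k) / s - C (fun k => s * v k) / s| ≤ ∑ m, |u m - v m| := by
  have hlip := copula_lip hC (scaled_cube hu hs0.le hs1) (scaled_cube hv hs0.le hs1)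
  rw [div_sub_div_same, abs_div, abs_of_pos hs0, div_le_iff₀ hs0]
  calc |C (fun k => s * u k) - C (fun k => s * v k)| ≤ ∑ m, |s * u m - s * v m| := hlip
    _ = ∑ m, s * |u m - v m| := Finset.sum_congr rfl fun m _ => by
        rw [← mul_sub, abs_mul, abs_of_pos hs0]
    _ = (∑ m, |u m - v m|) * s := by rw [Finset.sum_mul]; exact Finset.sum_congr rfl fun m _ => mul_comm _ _
      
lemma L_bounds (hd : 0 < d) (hC : IsCopula C) {L : (Fin d → ℝ) → ℝ} (hT : HasTDF C L)
    {u : Fin d → ℝ} (hu : ∀ m, u m ∈ Icc (0:ℝ) 1) :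
    0 ≤ L u ∧ L u ≤ ∑ m, u m := by
  have htd := hT u (fun m => (hu m).1)
  have hev : ∀ᶠ s : ℝ in nhdsWithin 0 (Ioi 0),
      C (fun k => s * u k) / s ∈ Icc (0:ℝ) (∑ m, u m) := by
    filter_upwards [Ioo_mem_nhdsGT_of_mem (show (0:ℝ) ∈ Ico (0:ℝ) 1 from ⟨le_refl 0, one_pos⟩)]
      with s hs
    have hcube := scaled_cube hu hs.1.le hs.2.le
    constructor
    · exact div_nonneg (C_nonneg hC hcube) hs.1.le
    · rw [div_le_iff₀ hs.1]
      calc C (fun k => s * u k) ≤ ∑ m, s * u m := C_le_sum hd hC hcube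
        _ = (∑ m, u m) * s := by rw [← Finset.mul_sum]; ring
  constructor
  · exact ge_of_tendsto htd (hev.mono fun s hs => hs.1)
  · exact le_of_tendsto htd (hev.mono fun s hs => hs.2)

lemma L_lip (hd : 0 < d) (hC : IsCopula C) {L : (Fin d → ℝ) → ℝ} (hT : HasTDF C L)
    {u v : Fin d → ℝ} (hu : ∀ m, u m ∈ Icc (0:ℝ) 1) (hv : ∀ m, v m ∈ Icc (0:ℝ) 1) :
    |L u - L v| ≤ ∑ m, |u m - v m| := by
  have h1 := hT u (fun m => (hu m).1)
  have h2 := hT v (fun m => (hv m).1)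
  have h3 : Tendsto (fun s : ℝ => |C (fun k => s * u k) / s - C (fun k => s * v k) / s|)
      (nhdsWithin 0 (Ioi 0)) (nhds |L u - L v|) := (h1.sub h2).abs
  refine le_of_tendsto h3 ?_
  filter_upwards [Ioo_mem_nhdsGT_of_mem (show (0:ℝ) ∈ Ico (0:ℝ) 1 from ⟨le_refl 0, one_pos⟩)]
    with s hs
  exact g_lip hd hC hu hv hs.1 hs.2.le

lemma sum_abs_le_dist {u v : Fin d → ℝ} : ∑ m, |u m - v m| ≤ (d : ℝ) * dist u v := by
  calc ∑ m, |u m - v m| ≤ ∑ _m : Fin d, dist u v :=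
        Finset.sum_le_sum fun m _ => by
          rw [← Real.dist_eq]; exact dist_le_pi_dist u v m
    _ = (d : ℝ) * dist u v := by simp [Finset.card_univ, mul_comm]

lemma unif_conv (hd : 0 < d) (hC : IsCopula C) {L : (Fin d → ℝ) → ℝ} (hT : HasTDF C L)
    {ε : ℝ} (hε : 0 < ε) :
    ∃ δ : ℝ, 0 < δ ∧ δ ≤ 1 ∧ ∀ t : ℝ, 0 < t → t < δ →
      ∀ w : Fin d → ℝ, (∀ m, w m ∈ Icc (0:ℝ) 1) →
        |C (fun k => t * w k) / t - L w| ≤ ε := by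
  classical
  set K : Set (Fin d → ℝ) := Icc 0 1 with hK
  have hmemK : ∀ w : Fin d → ℝ, (∀ m, w m ∈ Icc (0:ℝ) 1) ↔ w ∈ K := by
    intro w
    simp [hK, Set.mem_Icc, Pi.le_def, forall_and]
  have hKcomp : IsCompact K := isCompact_Icc
  have hdpos : (0:ℝ) < d := Nat.cast_pos.2 hd
  set r : ℝ := ε / (3 * d) with hr
  have hrpos : 0 < r := by positivity
  have hcov : K ⊆ ⋃ c ∈ K, Metric.ball c r := fun c hc =>
    Set.mem_biUnion hc (Metric.mem_ball_self hrpos)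
  obtain ⟨T, hTK, hTfin, hTcov⟩ :=
    hKcomp.elim_finite_subcover_image (fun c _ => Metric.isOpen_ball) hcov
  have hev : ∀ᶠ s : ℝ in nhdsWithin 0 (Ioi 0),
      s ∈ Ioo (0:ℝ) 1 ∧ ∀ c ∈ T, |C (fun k => s * c k) / s - L c| < ε / 3 := by
    refine Filter.Eventually.and
      (Ioo_mem_nhdsGT_of_mem ⟨le_refl 0, one_pos⟩) ?_
    rw [eventually_all_finite hTfin]
    intro c hc
    have hcK : ∀ m, c m ∈ Icc (0:ℝ) 1 := (hmemK c).2 (hTK hc)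
    have := (hT c fun m => (hcK m).1).eventually
      (Metric.ball_mem_nhds (L c) (by positivity : (0:ℝ) < ε / 3))
    filter_upwards [this] with s hs
    rwa [Real.dist_eq] at hs
  obtain ⟨δ₀, hδ₀, hsub⟩ := mem_nhdsGT_iff_exists_Ioo_subset.1 hev
  refine ⟨min δ₀ 1, lt_min hδ₀ one_pos, min_le_right _ _, ?_⟩
  intro t ht htδ w hw
  have htIoo : t ∈ Ioo (0:ℝ) δ₀ := ⟨ht, lt_of_lt_of_le htδ (min_le_left _ _)⟩
  obtain ⟨ht1, hTprop⟩ := hsub htIoo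
  obtain ⟨c, hcT, hwc⟩ := Set.mem_iUnion₂.1 (hTcov ((hmemK w).1 hw))
  have hcK : ∀ m, c m ∈ Icc (0:ℝ) 1 := (hmemK c).2 (hTK hcT)
  have hdist : dist w c < r := Metric.mem_ball.1 hwc
  have h1 : |C (fun k => t * w k) / t - C (fun k => t * c k) / t| ≤ ε / 3 := by
    calc _ ≤ ∑ m, |w m - c m| := g_lip hd hC hw hcK ht1.1 ht1.2.le
      _ ≤ (d : ℝ) * dist w c := sum_abs_le_dist
      _ ≤ (d : ℝ) * r := by nlinarith
      _ = ε / 3 := by rw [hr]; field_simp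
  have h2 : |C (fun k => t * c k) / t - L c| < ε / 3 := hTprop c hcT
  have h3 : |L c - L w| ≤ ε / 3 := by
    calc _ ≤ ∑ m, |c m - w m| := L_lip hd hC hT hcK hw
      _ ≤ (d : ℝ) * dist c w := sum_abs_le_dist
      _ ≤ (d : ℝ) * r := by rw [dist_comm]; nlinarith
      _ = ε / 3 := by rw [hr]; field_simp
  calc |C (fun k => t * w k) / t - L w|
      ≤ |C (fun k => t * w k) / t - C (fun k => t * c k) / t|
        + |C (fun k => t * c k) / t - L w| := abs_sub_le _ _ _
    _ ≤ |C (fun k => t * w k) / t - C (fun k => t * c k) / t|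
        + (|C (fun k => t * c k) / t - L c| + |L c - L w|) :=
        add_le_add_right (abs_sub_le _ _ _) _
    _ ≤ ε := by linarith

end Stmt0Aux


open Stmt0Aux

/-- For a `d`-copula `C` and a positively homogeneous (of order 1) function `L`
on `[0,∞)^d`, the tail dependence function of `C` exists and equals `L` iff `C` admits the
uniform lower tail expansion `C(u) = L(u) + R(u)·(u₁ + ⋯ + u_d)` with `R` bounded and
`R(u) → 0` as `u₁ + ⋯ + u_d → 0`. -/
theorem stmt0 {d : ℕ} (hd : 0 < d) (C : (Fin d → ℝ) → ℝ) (hC : IsCopula C)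
    (L : (Fin d → ℝ) → ℝ)
    (hL : ∀ s : ℝ, 0 < s → ∀ w : Fin d → ℝ, (∀ k, 0 ≤ w k) →
      L (fun k => s * w k) = s * L w) :
    HasTDF C L ↔
      ∃ R : (Fin d → ℝ) → ℝ,
        (∃ M : ℝ, ∀ u : Fin d → ℝ, (∀ k, u k ∈ Icc (0:ℝ) 1) → |R u| ≤ M) ∧
        (∀ ε : ℝ, 0 < ε → ∃ δ : ℝ, 0 < δ ∧
          ∀ u : Fin d → ℝ, (∀ k, u k ∈ Icc (0:ℝ) 1) → (∑ k, u k) < δ → |R u| < ε) ∧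
        (∀ u : Fin d → ℝ, (∀ k, u k ∈ Icc (0:ℝ) 1) →
          C u = L u + R u * ∑ k, u k) := by
  classical
  constructor
  · intro hT
    refine ⟨fun u => if (∑ k, u k) = 0 then 0 else (C u - L u) / (∑ k, u k),
      ⟨1, ?_⟩, ?_, ?_⟩
    · intro u hu
      by_cases h : (∑ k, u k) = 0
      · simp [h]
      · have hpos : 0 < ∑ k, u k :=
          lt_of_le_of_ne (Finset.sum_nonneg fun k _ => (hu k).1) (Ne.symm h)
        have hC1 := C_nonneg hC hu
        have hC2 := C_le_sum hd hC hu
        obtain ⟨hL1, hL2⟩ := L_bounds hd hC hT hu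
        simp only [if_neg h]
        rw [abs_div, abs_of_pos hpos, div_le_one hpos, abs_le]
        constructor <;> linarith
    · intro ε hε
      obtain ⟨δ, hδpos, hδ1, hδ⟩ := unif_conv hd hC hT (half_pos hε)
      refine ⟨δ, hδpos, ?_⟩
      intro u hu hsum
      by_cases h : (∑ k, u k) = 0
      · simp [h, hε]
      · have hpos : 0 < ∑ k, u k :=
          lt_of_le_of_ne (Finset.sum_nonneg fun k _ => (hu k).1) (Ne.symm h)
        simp only [if_neg h]
        set t := ∑ k, u k with ht
        set w : Fin d → ℝ := fun k => u k / t with hw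
        have hwcube : ∀ m, w m ∈ Icc (0:ℝ) 1 := by
          intro m
          constructor
          · exact div_nonneg (hu m).1 hpos.le
          · rw [hw]
            rw [div_le_one hpos]
            exact Finset.single_le_sum (fun k _ => (hu k).1) (Finset.mem_univ m)
        have huw : u = fun k => t * w k := by
          funext k
          rw [hw]
          field_simp
        have hLu : L u = t * L w := by
          rw [huw]
          exact hL t hpos w (fun m => (hwcube m).1)
        have hkey := hδ t hpos hsum w hwcube
        have heq2 : (C u - L u) / t = C (fun k => t * w k) / t - L w := by
          rw [hLu, sub_div, mul_div_cancel_left₀ _ hpos.ne']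
          rw [huw]
        rw [heq2]
        exact lt_of_le_of_lt hkey (half_lt_self hε)
    · intro u hu
      by_cases h : (∑ k, u k) = 0
      · have hC1 := C_nonneg hC hu
        have hC2 := C_le_sum hd hC hu
        obtain ⟨hL1, hL2⟩ := L_bounds hd hC hT hu
        rw [h] at hC2 hL2
        rw [h]
        simp
        linarith
      · simp only [if_neg h]
        rw [div_mul_cancel₀ _ h]
        ring
  · rintro ⟨R, ⟨M, hM⟩, hsmall, heq⟩ w hw
    rw [Metric.tendsto_nhdsWithin_nhds]
    intro ε hε
    set T := ∑ k, w k with hT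
    have hT0 : 0 ≤ T := Finset.sum_nonneg fun k _ => hw k
    rcases eq_or_lt_of_le hT0 with hT0' | hTpos
    · have hw0 : ∀ k, w k = 0 := by
        intro k
        exact (Finset.sum_eq_zero_iff_of_nonneg (fun k _ => hw k)).1 hT0'.symm k
          (Finset.mem_univ k)
      have hL0 : L w = 0 := by
        have h2 := hL 2 two_pos w hw
        have hww : (fun k => (2:ℝ) * w k) = w := by funext k; rw [hw0 k]; ring
        rw [hww] at h2
        linarith
      refine ⟨1, one_pos, ?_⟩
      intro s _ _
      have hsw : (fun k => s * w k) = fun _ => (0:ℝ) := by funext k; rw [hw0 k]; ring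
      rw [hsw]
      have hCz : C (fun _ => (0:ℝ)) = 0 := hC.2.1 _ (fun m => by simp) ⟨⟨0, hd⟩, rfl⟩
      rw [hCz, hL0]
      simpa using hε
    · obtain ⟨δ₁, hδ₁pos, hδ₁⟩ := hsmall (ε / (2 * T)) (by positivity)
      refine ⟨min (1 / T) (δ₁ / T), lt_min (by positivity) (by positivity), ?_⟩
      intro s hs hsd
      have hs0 : (0:ℝ) < s := hs
      rw [Real.dist_eq, sub_zero, abs_of_pos hs0] at hsd
      have hs1 : s < 1 / T := lt_of_lt_of_le hsd (min_le_left _ _)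
      have hs2 : s < δ₁ / T := lt_of_lt_of_le hsd (min_le_right _ _)
      have hcube : ∀ m, (s * w m) ∈ Icc (0:ℝ) 1 := by
        intro m
        constructor
        · exact mul_nonneg hs0.le (hw m)
        · have hwm : w m ≤ T := Finset.single_le_sum (fun k _ => hw k) (Finset.mem_univ m)
          have e1 : (1 / T) * T = 1 := by field_simp
          have e2 : s * T < (1 / T) * T := mul_lt_mul_of_pos_right hs1 hTpos
          have e3 : s * w m ≤ s * T := mul_le_mul_of_nonneg_left hwm hs0.le
          linarith
      have hsum : ∑ k, s * w k = s * T := by rw [hT, Finset.mul_sum]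
      have hCeq := heq (fun k => s * w k) hcube
      have hLs := hL s hs0 w hw
      have hRs : |R (fun k => s * w k)| < ε / (2 * T) := by
        apply hδ₁ _ hcube
        rw [hsum]
        calc s * T < (δ₁ / T) * T := mul_lt_mul_of_pos_right hs2 hTpos
          _ = δ₁ := by field_simp
      rw [Real.dist_eq]
      have hmain : C (fun k => s * w k) / s - L w = R (fun k => s * w k) * T := by
        rw [hCeq, hLs, hsum]
        field_simp
        ring
      rw [hmain, abs_mul, abs_of_pos hTpos]
      have h1 : |R (fun k => s * w k)| * T < (ε / (2 * T)) * T :=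
        mul_lt_mul_of_pos_right hRs hTpos
      have h2 : (ε / (2 * T)) * T = ε / 2 := by field_simp
      linarith
end

section
/- Let C1 and C2 be d-copulas, each admitting a tail dependence function, such that C1 <_Λ C2 (i.e. Λ(w; C1) < Λ(w; C2) for all w ∈ (0,∞)^d). Then for every cone S ⊆ (0,∞)^d (i.e. w ∈ S implies λw ∈ S for every λ > 0) such that S ∪ {0} is closed in [0,∞)^d, there exists ε > 0 such that C1(u) ≤ C2(u) for all u ∈ S ∩ [0,1]^d with ‖u‖ < ε. -/
open Filter Set

lemma copula_mono {d : ℕ} {C : (Fin d → ℝ) → ℝ} (hC : IsCopula C)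
    (u : Fin d → ℝ) (hu : ∀ k, u k ∈ Icc (0:ℝ) 1) (k : Fin d) (x : ℝ)
    (hx0 : 0 ≤ x) (hxu : x ≤ u k) :
    C (Function.update u k x) ≤ C u := by
  obtain ⟨hrange, hground, hmarg, hbox⟩ := hC
  set a : Fin d → ℝ := fun l => if l = k then x else 0 with ha
  have hsum := hbox a u (fun l => by by_cases h : l = k <;> simp [ha, h, hx0])
    (fun l => by by_cases h : l = k <;> simp [ha, h, hxu, (hu l).1])
    (fun l => (hu l).2)
  set v1 : Fin d → Bool := fun _ => true with hv1
  set v2 : Fin d → Bool := Function.update (fun _ => true) k false with hv2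
  have hne : v1 ≠ v2 := by
    intro h
    have := congrFun h k
    simp [hv1, hv2] at this
  have hcube : ∀ v : Fin d → Bool, ∀ l, (if v l then u l else a l) ∈ Icc (0:ℝ) 1 := by
    intro v l
    by_cases h : v l = true
    · simpa [h] using hu l
    · by_cases h2 : l = k
      · subst h2
        simp only [h, if_false, ha, if_true]
        exact ⟨hx0, hxu.trans (hu l).2⟩
      · simp [h, ha, h2]
  have hzero : ∀ v ∈ Finset.univ, v ≠ v1 ∧ v ≠ v2 →
      (-1 : ℝ) ^ (Finset.univ.filter fun l => v l = false).card *
        C (fun l => if v l then u l else a l) = 0 := by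
    intro v _ ⟨h1, h2⟩
    have : ∃ l, l ≠ k ∧ v l = false := by
      by_contra h
      push_neg at h
      cases hvk : v k
      · apply h2; funext l
        by_cases hl : l = k
        · subst hl; simp [hv2, hvk]
        · simp only [hv2, Function.update_apply, if_neg hl]
          exact Bool.ne_false_iff.mp (h l hl)
      · apply h1; funext l
        by_cases hl : l = k
        · subst hl; simpa [hv1] using hvk
        · simpa [hv1] using h l hl
    obtain ⟨l, hlk, hvl⟩ := this
    have : C (fun m => if v m then u m else a m) = 0 := by
      apply hground _ (hcube v)
      exact ⟨l, by simp [hvl, ha, hlk]⟩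
    rw [this, mul_zero]
  have h1 : ((-1 : ℝ) ^ (Finset.univ.filter fun l => v1 l = false).card *
      C (fun l => if v1 l then u l else a l)) = C u := by
    have he : (Finset.univ.filter fun l => v1 l = false) = ∅ := by
      ext l; simp [hv1]
    rw [he]
    simp [hv1]
  have h2 : ((-1 : ℝ) ^ (Finset.univ.filter fun l => v2 l = false).card *
      C (fun l => if v2 l then u l else a l)) = -C (Function.update u k x) := by
    have hf : (Finset.univ.filter fun l => v2 l = false) = {k} := by
      ext l
      by_cases hl : l = k <;> simp [hv2, Function.update_apply, hl]
    have hvert : (fun l => if v2 l then u l else a l) = Function.update u k x := by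
      funext l
      by_cases hl : l = k
      · subst hl; simp [hv2, ha]
      · simp [hv2, Function.update_apply, hl, ha]
    rw [hf, hvert]
    simp
  rw [Finset.sum_eq_add v1 v2 hne hzero (fun h => absurd (Finset.mem_univ v1) h)
    (fun h => absurd (Finset.mem_univ v2) h), h1, h2] at hsum
  linarith

lemma copula_rect {d : ℕ} {C : (Fin d → ℝ) → ℝ} (hC : IsCopula C)
    (u : Fin d → ℝ) (hu : ∀ m, u m ∈ Icc (0:ℝ) 1) (k l : Fin d) (hkl : k ≠ l)
    (x y : ℝ) (hx0 : 0 ≤ x) (hxu : x ≤ u k) (huy : u l ≤ y) (hy1 : y ≤ 1) :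
    C u - C (Function.update u k x) ≤
      C (Function.update u l y) - C (Function.update (Function.update u l y) k x) := by
  obtain ⟨hrange, hground, hmarg, hbox⟩ := hC
  set b : Fin d → ℝ := Function.update u l y with hb
  set a : Fin d → ℝ := fun m => if m = k then x else if m = l then u l else 0 with ha
  have hbk : b k = u k := Function.update_of_ne hkl y u
  have hbval : ∀ m, m ≠ l → b m = u m := fun m hm => Function.update_of_ne hm y u
  have ha0 : ∀ m, 0 ≤ a m := by
    intro m
    by_cases h1 : m = k
    · simp [ha, h1, hx0]
    · by_cases h2 : m = l <;> simp [ha, h1, h2, Ne.symm hkl, (hu l).1]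
  have hab : ∀ m, a m ≤ b m := by
    intro m
    by_cases h1 : m = k
    · subst h1; simp [ha, hbk, hxu]
    · by_cases h2 : m = l
      · subst h2; simp [ha, h1, hb, huy]
      · simp [ha, h1, h2, hbval m h2, (hu m).1]
  have hb1 : ∀ m, b m ≤ 1 := by
    intro m
    by_cases h2 : m = l
    · subst h2; simp [hb, hy1]
    · rw [hbval m h2]; exact (hu m).2
  have hsum := hbox a b ha0 hab hb1
  set vtt : Fin d → Bool := fun _ => true with hvtt
  set vft : Fin d → Bool := Function.update (fun _ => true) k false with hvft
  set vtf : Fin d → Bool := Function.update (fun _ => true) l false with hvtf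
  set vff : Fin d → Bool := Function.update (Function.update (fun _ => true) k false) l false
    with hvff
  -- evaluations
  have eft : ∀ m, vft m = if m = k then false else true := by
    intro m; simp [hvft, Function.update_apply]
  have etf : ∀ m, vtf m = if m = l then false else true := by
    intro m; simp [hvtf, Function.update_apply]
  have eff : ∀ m, vff m = if m = l then false else if m = k then false else true := by
    intro m; simp [hvff, Function.update_apply]
  have hcube : ∀ v : Fin d → Bool, ∀ m, (if v m then b m else a m) ∈ Icc (0:ℝ) 1 := by
    intro v m
    by_cases h : v m = true
    · simp only [h, if_true]; exact ⟨(ha0 m).trans (hab m), hb1 m⟩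
    · simp only [h, if_false]; exact ⟨ha0 m, (hab m).trans (hb1 m)⟩
  have hzero : ∀ v : Fin d → Bool, v ∉ ({vtt, vft, vtf, vff} : Finset (Fin d → Bool)) →
      (-1 : ℝ) ^ (Finset.univ.filter fun m => v m = false).card *
        C (fun m => if v m then b m else a m) = 0 := by
    intro v hv
    have : ∃ m, m ≠ k ∧ m ≠ l ∧ v m = false := by
      by_contra h
      push_neg at h
      apply hv
      have hveq : ∀ w : Fin d → Bool, v k = w k → v l = w l →
          (∀ m, m ≠ k → m ≠ l → w m = true) → v = w := by
        intro w h1 h2 h3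
        funext m
        by_cases hm1 : m = k
        · subst hm1; exact h1
        · by_cases hm2 : m = l
          · subst hm2; exact h2
          · rw [h3 m hm1 hm2]
            exact Bool.ne_false_iff.mp (h m hm1 hm2)
      simp only [Finset.mem_insert, Finset.mem_singleton]
      cases h1 : v k <;> cases h2 : v l
      · right; right; right
        exact hveq vff (by rw [h1, eff k]; simp [hkl])
          (by rw [h2, eff l]; simp)
          (fun m hm1 hm2 => by rw [eff m]; simp [hm1, hm2])
      · right; left
        exact hveq vft (by rw [h1, eft k]; simp)
          (by rw [h2, eft l]; simp [hkl.symm])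
          (fun m hm1 hm2 => by rw [eft m]; simp [hm1])
      · right; right; left
        exact hveq vtf (by rw [h1, etf k]; simp [hkl])
          (by rw [h2, etf l]; simp)
          (fun m hm1 hm2 => by rw [etf m]; simp [hm2])
      · left
        exact hveq vtt (by simp [hvtt, h1]) (by simp [hvtt, h2])
          (fun m _ _ => by simp [hvtt])
    obtain ⟨m, hmk, hml, hvm⟩ := this
    have : C (fun n => if v n then b n else a n) = 0 := by
      apply hground _ (hcube v)
      exact ⟨m, by simp [hvm, ha, hmk, hml]⟩
    rw [this, mul_zero]
  classical
  have nek : ∀ (w1 w2 : Fin d → Bool) (m : Fin d), w1 m ≠ w2 m → w1 ≠ w2 :=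
    fun _ _ m h he => h (congrFun he m)
  have ne12 : vtt ≠ vft := nek _ _ k (by simp [hvtt, eft k])
  have ne13 : vtt ≠ vtf := nek _ _ l (by simp [hvtt, etf l])
  have ne14 : vtt ≠ vff := nek _ _ k (by simp [hvtt, eff k, hkl])
  have ne23 : vft ≠ vtf := nek _ _ k (by simp [eft k, etf k, hkl])
  have ne24 : vft ≠ vff := nek _ _ l (by simp [eft l, eff l, Ne.symm hkl])
  have ne34 : vtf ≠ vff := nek _ _ k (by simp [etf k, eff k, hkl])
  rw [← Finset.sum_subset (Finset.subset_univ ({vtt, vft, vtf, vff} : Finset (Fin d → Bool)))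
    (fun v _ hv => hzero v hv)] at hsum
  rw [Finset.sum_insert (by simp [Finset.mem_insert, ne12, ne13, ne14]),
    Finset.sum_insert (by simp [Finset.mem_insert, ne23, ne24]),
    Finset.sum_insert (by simp [ne34]), Finset.sum_singleton] at hsum
  have ftt : ((-1 : ℝ) ^ (Finset.univ.filter fun m => vtt m = false).card *
      C (fun m => if vtt m then b m else a m)) = C b := by
    have hfil : (Finset.univ.filter fun m => vtt m = false) = ∅ := by
      ext m; simp [hvtt]
    have hvert : (fun m => if vtt m then b m else a m) = b := by
      funext m; simp [hvtt]
    rw [hfil, hvert]; simp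
  have fft : ((-1 : ℝ) ^ (Finset.univ.filter fun m => vft m = false).card *
      C (fun m => if vft m then b m else a m)) = -C (Function.update b k x) := by
    have hfil : (Finset.univ.filter fun m => vft m = false) = {k} := by
      ext m
      rw [Finset.mem_filter, eft m]
      by_cases h : m = k <;> simp [h]
    have hvert : (fun m => if vft m then b m else a m) = Function.update b k x := by
      funext m
      rw [eft m]
      by_cases h : m = k
      · subst h; simp [ha]
      · simp [h, Function.update_apply]
    rw [hfil, hvert]; simp
  have ftf : ((-1 : ℝ) ^ (Finset.univ.filter fun m => vtf m = false).card *
      C (fun m => if vtf m then b m else a m)) = -C u := by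
    have hfil : (Finset.univ.filter fun m => vtf m = false) = {l} := by
      ext m
      rw [Finset.mem_filter, etf m]
      by_cases h : m = l <;> simp [h]
    have hvert : (fun m => if vtf m then b m else a m) = u := by
      funext m
      rw [etf m]
      by_cases h : m = l
      · subst h; simp [ha, Ne.symm hkl]
      · simp [h, hbval m h]
    rw [hfil, hvert]; simp
  have fff : ((-1 : ℝ) ^ (Finset.univ.filter fun m => vff m = false).card *
      C (fun m => if vff m then b m else a m)) = C (Function.update u k x) := by
    have hfil : (Finset.univ.filter fun m => vff m = false) = {k, l} := by
      ext m
      rw [Finset.mem_filter, eff m]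
      by_cases h : m = l
      · simp [h]
      · by_cases h2 : m = k <;> simp [h, h2]
    have hvert : (fun m => if vff m then b m else a m) = Function.update u k x := by
      funext m
      rw [eff m]
      by_cases h : m = l
      · subst h; simp [ha, Ne.symm hkl, Function.update_apply]
      · by_cases h2 : m = k
        · subst h2; simp [ha]
        · simp [h, h2, hbval m h, Function.update_apply]
    rw [hfil, hvert, Finset.card_pair hkl]
    simp
  rw [ftt, fft, ftf, fff] at hsum
  linarith

lemma copula_update_le {d : ℕ} {C : (Fin d → ℝ) → ℝ} (hC : IsCopula C)
    (w : Fin d → ℝ) (hw : ∀ m, w m ∈ Icc (0:ℝ) 1) (k : Fin d) (x y : ℝ)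
    (hx0 : 0 ≤ x) (hxy : x ≤ y) (hy1 : y ≤ 1) :
    C (Function.update w k y) - C (Function.update w k x) ≤ y - x := by
  classical
  have key : ∀ T : Finset (Fin d), k ∉ T →
      C (Function.update w k y) - C (Function.update w k x) ≤
      C (Function.update (T.piecewise (fun _ => (1:ℝ)) w) k y) -
        C (Function.update (T.piecewise (fun _ => (1:ℝ)) w) k x) := by
    intro T
    induction T using Finset.induction_on with
    | empty => intro _; rw [Finset.piecewise_empty]
    | insert l T hl ih =>
      intro hk
      have hkl : k ≠ l := fun h => hk (h ▸ Finset.mem_insert_self l T)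
      have hkT : k ∉ T := fun h => hk (Finset.mem_insert_of_mem h)
      refine (ih hkT).trans ?_
      set z : Fin d → ℝ := T.piecewise (fun _ => (1:ℝ)) w with hz
      have hzc : ∀ m, z m ∈ Icc (0:ℝ) 1 := by
        intro m
        by_cases hm : m ∈ T
        · rw [hz, T.piecewise_eq_of_mem _ _ hm]; exact ⟨zero_le_one, le_refl 1⟩
        · rw [hz, T.piecewise_eq_of_notMem _ _ hm]; exact hw m
      have huc : ∀ m, Function.update z k y m ∈ Icc (0:ℝ) 1 := by
        intro m
        by_cases hm : m = k
        · subst hm; rw [Function.update_self]; exact ⟨hx0.trans hxy, hy1⟩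
        · rw [Function.update_of_ne hm]; exact hzc m
      have hrect := copula_rect hC (Function.update z k y) huc k l hkl x 1 hx0
        (by rw [Function.update_self]; exact hxy)
        (by rw [Function.update_of_ne (Ne.symm hkl)]; exact (hzc l).2) le_rfl
      rw [Function.update_idem] at hrect
      rw [Function.update_comm hkl y (1:ℝ) z] at hrect
      rw [Function.update_idem] at hrect
      rw [Finset.piecewise_insert]
      exact hrect
  have hfin := key (Finset.univ.erase k) (Finset.notMem_erase k _)
  set z : Fin d → ℝ := (Finset.univ.erase k).piecewise (fun _ => (1:ℝ)) w with hz
  have hz1 : ∀ m, m ≠ k → z m = 1 := by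
    intro m hm
    rw [hz, Finset.piecewise_eq_of_mem]
    exact Finset.mem_erase.mpr ⟨hm, Finset.mem_univ m⟩
  have hcy : ∀ t : ℝ, 0 ≤ t → t ≤ 1 → C (Function.update z k t) = t := by
    intro t ht0 ht1
    have hcube : ∀ m, Function.update z k t m ∈ Icc (0:ℝ) 1 := by
      intro m
      by_cases hm : m = k
      · subst hm; rw [Function.update_self]; exact ⟨ht0, ht1⟩
      · rw [Function.update_of_ne hm, hz1 m hm]; exact ⟨zero_le_one, le_rfl⟩
    have := hC.2.2.1 (Function.update z k t) hcube k
      (fun m hm => by rw [Function.update_of_ne hm]; exact hz1 m hm)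
    rw [this, Function.update_self]
  rw [hcy y (hx0.trans hxy) hy1, hcy x hx0 (hxy.trans hy1)] at hfin
  exact hfin

lemma copula_update_abs {d : ℕ} {C : (Fin d → ℝ) → ℝ} (hC : IsCopula C)
    (w : Fin d → ℝ) (hw : ∀ m, w m ∈ Icc (0:ℝ) 1) (k : Fin d) (x y : ℝ)
    (hx : x ∈ Icc (0:ℝ) 1) (hy : y ∈ Icc (0:ℝ) 1) :
    |C (Function.update w k y) - C (Function.update w k x)| ≤ |y - x| := by
  have main : ∀ s t : ℝ, s ∈ Icc (0:ℝ) 1 → t ∈ Icc (0:ℝ) 1 → s ≤ t →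
      |C (Function.update w k t) - C (Function.update w k s)| ≤ |t - s| := by
    intro s t hs ht hst
    have hcube : ∀ m, Function.update w k t m ∈ Icc (0:ℝ) 1 := by
      intro m
      by_cases hm : m = k
      · subst hm; rw [Function.update_self]; exact ht
      · rw [Function.update_of_ne hm]; exact hw m
    have hmono : C (Function.update w k s) ≤ C (Function.update w k t) := by
      have := copula_mono hC (Function.update w k t) hcube k s hs.1
        (by rw [Function.update_self]; exact hst)
      rwa [Function.update_idem] at this
    rw [abs_of_nonneg (sub_nonneg.mpr hmono), abs_of_nonneg (sub_nonneg.mpr hst)]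
    exact copula_update_le hC w hw k s t hs.1 hst ht.2
  rcases le_total x y with h | h
  · exact main x y hx hy h
  · rw [abs_sub_comm, abs_sub_comm y x]
    exact main y x hy hx h

lemma copula_lipschitz {d : ℕ} {C : (Fin d → ℝ) → ℝ} (hC : IsCopula C)
    (u v : Fin d → ℝ) (hu : ∀ m, u m ∈ Icc (0:ℝ) 1) (hv : ∀ m, v m ∈ Icc (0:ℝ) 1) :
    |C v - C u| ≤ ∑ m : Fin d, |v m - u m| := by
  classical
  have key : ∀ T : Finset (Fin d),
      |C (T.piecewise v u) - C u| ≤ ∑ m ∈ T, |v m - u m| := by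
    intro T
    induction T using Finset.induction_on with
    | empty => simp
    | insert l T hl ih =>
      have hpc : ∀ m, (T.piecewise v u) m ∈ Icc (0:ℝ) 1 := by
        intro m
        by_cases hm : m ∈ T
        · rw [T.piecewise_eq_of_mem _ _ hm]; exact hv m
        · rw [T.piecewise_eq_of_notMem _ _ hm]; exact hu m
      have step : |C ((insert l T).piecewise v u) - C (T.piecewise v u)| ≤ |v l - u l| := by
        have h1 : (insert l T).piecewise v u = Function.update (T.piecewise v u) l (v l) :=
          Finset.piecewise_insert _ _ _ _
      -- also T.piecewise v u = update (T.piecewise v u) l (u l)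
        have h2 : T.piecewise v u = Function.update (T.piecewise v u) l (u l) := by
          rw [← T.piecewise_eq_of_notMem v u hl, Function.update_eq_self]
        rw [h1]
        nth_rewrite 2 [h2]
        exact copula_update_abs hC (T.piecewise v u) hpc l (u l) (v l) (hu l) (hv l)
      calc |C ((insert l T).piecewise v u) - C u|
          ≤ |C ((insert l T).piecewise v u) - C (T.piecewise v u)| +
            |C (T.piecewise v u) - C u| := abs_sub_le _ _ _
        _ ≤ |v l - u l| + ∑ m ∈ T, |v m - u m| := add_le_add step ih
        _ = ∑ m ∈ insert l T, |v m - u m| := by rw [Finset.sum_insert hl]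
  have := key Finset.univ
  rwa [Finset.piecewise_univ] at this

lemma const_div_limit_zero {c L : ℝ} (hc : 0 ≤ c)
    (h : Tendsto (fun s : ℝ => c / s) (nhdsWithin 0 (Ioi 0)) (nhds L)) : c = 0 ∧ L = 0 := by
  rcases eq_or_lt_of_le hc with h0 | h0
  · refine ⟨h0.symm, ?_⟩
    have h' : Tendsto (fun s : ℝ => c / s) (nhdsWithin 0 (Ioi 0)) (nhds 0) := by
      have : (fun s : ℝ => c / s) = fun _ => (0:ℝ) := by
        funext s; rw [← h0, zero_div]
      rw [this]
      exact tendsto_const_nhds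
    exact tendsto_nhds_unique h h'
  · exfalso
    have h1 : Tendsto (fun s : ℝ => c / s) (nhdsWithin 0 (Ioi 0)) atTop := by
      simpa [div_eq_mul_inv] using tendsto_inv_nhdsGT_zero.const_mul_atTop h0
    exact not_tendsto_nhds_of_tendsto_atTop h1 L h

/-- If `C1 <_Λ C2` then, on every cone `S ⊆ (0,∞)^d` with `S ∪ {0}` closed in
`[0,∞)^d`, one has `C1 ≤ C2` near the origin. -/
theorem stmt5 {d : ℕ} (C1 C2 Λ1 Λ2 : (Fin d → ℝ) → ℝ)
    (hC1 : IsCopula C1) (hC2 : IsCopula C2)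
    (hT1 : HasTDF C1 Λ1) (hT2 : HasTDF C2 Λ2)
    (hlt : ∀ w : Fin d → ℝ, (∀ k, 0 < w k) → Λ1 w < Λ2 w)
    (S : Set (Fin d → ℝ))
    (hSpos : ∀ w ∈ S, ∀ k, 0 < w k)
    (hScone : ∀ w ∈ S, ∀ c : ℝ, 0 < c → c • w ∈ S)
    (hSclosed : ∀ x : Fin d → ℝ, (∀ k, 0 ≤ x k) → x ∈ closure (S ∪ {0}) → x ∈ S ∪ {0}) :
    ∃ ε : ℝ, 0 < ε ∧
      ∀ u ∈ S, (∀ k, u k ≤ 1) → ‖u‖ < ε → C1 u ≤ C2 u := by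
  rcases Nat.eq_zero_or_pos d with hd | hd
  · -- d = 0 : derive a contradiction from hlt
    exfalso
    subst hd
    set w0 : Fin 0 → ℝ := fun k => k.elim0 with hw0
    have hnn : ∀ k : Fin 0, (0:ℝ) ≤ w0 k := fun k => k.elim0
    have hfun : ∀ s : ℝ, (fun k : Fin 0 => s * w0 k) = w0 := by
      intro s; funext k; exact k.elim0
    have h1 := hT1 w0 hnn
    have h2 := hT2 w0 hnn
    simp only [hfun] at h1 h2
    have hc1 : (0:ℝ) ≤ C1 w0 := (hC1.1 w0 (fun k => k.elim0)).1
    have hc2 : (0:ℝ) ≤ C2 w0 := (hC2.1 w0 (fun k => k.elim0)).1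
    have e1 := (const_div_limit_zero hc1 h1).2
    have e2 := (const_div_limit_zero hc2 h2).2
    have := hlt w0 (fun k => k.elim0)
    rw [e1, e2] at this
    exact lt_irrefl 0 this
  · by_contra hcon
    push_neg at hcon
    have hn : ∀ n : ℕ, ∃ u, u ∈ S ∧ (∀ k, u k ≤ 1) ∧ ‖u‖ < 1/(n+1) ∧ C2 u < C1 u := by
      intro n
      obtain ⟨u, huS, h1, h2, h3⟩ := hcon (1/(n+1)) (by positivity)
      exact ⟨u, huS, h1, h2, h3⟩
    choose u huS hu1 hun hCC using hn
    set s : ℕ → ℝ := fun n => ‖u n‖ with hs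
    have hspos : ∀ n, 0 < s n := by
      intro n
      rw [hs, norm_pos_iff]
      intro h0
      have := hSpos (u n) (huS n) ⟨0, hd⟩
      rw [h0] at this
      simp at this
    set w : ℕ → (Fin d → ℝ) := fun n => (s n)⁻¹ • u n with hw
    have hwS : ∀ n, w n ∈ S := fun n => hScone (u n) (huS n) _ (inv_pos.mpr (hspos n))
    have hwsphere : ∀ n, w n ∈ Metric.sphere (0 : Fin d → ℝ) 1 := by
      intro n
      rw [mem_sphere_zero_iff_norm, hw]
      simp only [norm_smul, norm_inv, norm_norm, hs]
      rw [inv_mul_cancel₀ (hspos n).ne']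
    obtain ⟨winf, hwinfs, φ, hφ, hconv⟩ :=
      (isCompact_sphere (0 : Fin d → ℝ) 1).tendsto_subseq hwsphere
    have hwinfnorm : ‖winf‖ = 1 := mem_sphere_zero_iff_norm.mp hwinfs
    have hwinfnn : ∀ k, 0 ≤ winf k := by
      intro k
      have hk : Tendsto (fun n => w (φ n) k) atTop (nhds (winf k)) :=
        (tendsto_pi_nhds.mp hconv) k
      exact ge_of_tendsto' hk (fun n =>
        (mul_pos (inv_pos.mpr (hspos (φ n))) (hSpos _ (huS (φ n)) k)).le)
    have hwinfS : winf ∈ S := by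
      have hcl : winf ∈ closure (S ∪ {0}) :=
        mem_closure_of_tendsto hconv (Eventually.of_forall fun n => Or.inl (hwS (φ n)))
      rcases hSclosed winf hwinfnn hcl with h | h
      · exact h
      · exfalso
        rw [mem_singleton_iff] at h
        rw [h] at hwinfnorm
        simp at hwinfnorm
    have hwpos : ∀ k, 0 < winf k := hSpos winf hwinfS
    have hwle1 : ∀ k, winf k ≤ 1 := by
      intro k
      have h2 := norm_le_pi_norm winf k
      rw [hwinfnorm] at h2
      calc winf k ≤ |winf k| := le_abs_self _
        _ ≤ 1 := by rwa [Real.norm_eq_abs] at h2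
    have hsle1 : ∀ n, s n ≤ 1 := by
      intro n
      refine (hun n).le.trans ?_
      rw [div_le_one (by positivity)]
      have : (0:ℝ) ≤ (n:ℝ) := Nat.cast_nonneg n
      linarith
    have hs0 : Tendsto (fun n => s (φ n)) atTop (nhds 0) := by
      have h1 : Tendsto (fun n : ℕ => 1/((n:ℝ)+1)) atTop (nhds 0) :=
        tendsto_one_div_add_atTop_nhds_zero_nat
      have h2 := squeeze_zero (fun n => (hspos n).le) (fun n => (hun n).le) h1
      exact h2.comp hφ.tendsto_atTop
    have hsIoi : Tendsto (fun n => s (φ n)) atTop (nhdsWithin 0 (Ioi 0)) :=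
      tendsto_nhdsWithin_iff.mpr ⟨hs0, Eventually.of_forall fun n => hspos (φ n)⟩
    have hA : Tendsto (fun n => C1 (fun k => s (φ n) * winf k) / s (φ n)) atTop
        (nhds (Λ1 winf)) := (hT1 winf (fun k => (hwpos k).le)).comp hsIoi
    have hB : Tendsto (fun n => C2 (fun k => s (φ n) * winf k) / s (φ n)) atTop
        (nhds (Λ2 winf)) := (hT2 winf (fun k => (hwpos k).le)).comp hsIoi
    have hdelta : Tendsto (fun n => (d:ℝ) * ‖w (φ n) - winf‖) atTop (nhds 0) := by
      have h1 : Tendsto (fun n => ‖w (φ n) - winf‖) atTop (nhds 0) := by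
        have h2 := (hconv.sub (tendsto_const_nhds (x := winf))).norm
        simpa [Function.comp] using h2
      simpa using h1.const_mul (d:ℝ)
    have hkey : ∀ n, C2 (fun k => s (φ n) * winf k) / s (φ n) ≤
        C1 (fun k => s (φ n) * winf k) / s (φ n) +
          2 * ((d:ℝ) * ‖w (φ n) - winf‖) := by
      intro n
      have ht : 0 < s (φ n) := hspos (φ n)
      have hcubeu : ∀ k, u (φ n) k ∈ Icc (0:ℝ) 1 :=
        fun k => ⟨(hSpos _ (huS _) k).le, hu1 _ k⟩
      have hcubew : ∀ k, (s (φ n) * winf k) ∈ Icc (0:ℝ) 1 := fun k =>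
        ⟨(mul_pos ht (hwpos k)).le, mul_le_one₀ (hsle1 _) (hwpos k).le (hwle1 k)⟩
      have hdiff : ∀ k, |s (φ n) * winf k - u (φ n) k| ≤ s (φ n) * ‖w (φ n) - winf‖ := by
        intro k
        have hu_eq : u (φ n) k = s (φ n) * w (φ n) k := by
          rw [hw]
          simp only [Pi.smul_apply, smul_eq_mul]
          field_simp
        rw [hu_eq, ← mul_sub, abs_mul, abs_of_pos ht]
        refine mul_le_mul_of_nonneg_left ?_ ht.le
        have h3 := norm_le_pi_norm (w (φ n) - winf) k
        simpa [Real.norm_eq_abs, abs_sub_comm] using h3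
      have hsumb : ∑ k : Fin d, |s (φ n) * winf k - u (φ n) k| ≤
          s (φ n) * ((d:ℝ) * ‖w (φ n) - winf‖) := by
        calc ∑ k : Fin d, |s (φ n) * winf k - u (φ n) k|
            ≤ ∑ _k : Fin d, s (φ n) * ‖w (φ n) - winf‖ :=
              Finset.sum_le_sum (fun k _ => hdiff k)
          _ = s (φ n) * ((d:ℝ) * ‖w (φ n) - winf‖) := by
              rw [Finset.sum_const, Finset.card_univ, Fintype.card_fin]
              push_cast
              ring
      have hL1 := (copula_lipschitz hC1 (u (φ n)) (fun k => s (φ n) * winf k)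
        hcubeu hcubew).trans hsumb
      have hL2 := (copula_lipschitz hC2 (u (φ n)) (fun k => s (φ n) * winf k)
        hcubeu hcubew).trans hsumb
      have hb1 := abs_le.mp hL1
      have hb2 := abs_le.mp hL2
      have hcc := hCC (φ n)
      have hmain : C2 (fun k => s (φ n) * winf k) ≤
          C1 (fun k => s (φ n) * winf k) +
            2 * (s (φ n) * ((d:ℝ) * ‖w (φ n) - winf‖)) := by
        have e1 := hb1.1
        have e2 := hb2.2
        linarith
      rw [div_add' _ _ _ ht.ne', div_le_div_iff₀ ht ht]
      have hnn : 0 ≤ 2 * ((d:ℝ) * ‖w (φ n) - winf‖) := by positivity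
      nlinarith [mul_le_mul_of_nonneg_right hmain ht.le]
    have hfinal : Λ2 winf ≤ Λ1 winf := by
      have hg : Tendsto (fun n => C1 (fun k => s (φ n) * winf k) / s (φ n) +
          2 * ((d:ℝ) * ‖w (φ n) - winf‖)) atTop (nhds (Λ1 winf)) := by
        have := hA.add (hdelta.const_mul 2)
        simpa using this
      exact le_of_tendsto_of_tendsto' hB hg hkey
    exact absurd (hlt winf hwpos) (not_lt.mpr hfinal)
end

section
/- Let C1 and C2 be d-copulas, each admitting a tail dependence function, with diagonal sections δ1(t) = C1(t,…,t) and δ2(t) = C2(t,…,t). If C1 <_Λ C2 (i.e. Λ(w; C1) < Λ(w; C2) for all w ∈ (0,∞)^d), then there exists ε > 0 such that δ1(t) ≤ δ2(t) for all t ∈ [0, ε]. -/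
open Filter Set

/-- The strict tail dependence order implies the ordering of the diagonal
sections near 0. -/
theorem stmt7 {d : ℕ} (hd : 0 < d) (C1 C2 Λ1 Λ2 : (Fin d → ℝ) → ℝ)
    (hC1 : IsCopula C1) (hC2 : IsCopula C2)
    (hT1 : HasTDF C1 Λ1) (hT2 : HasTDF C2 Λ2)
    (hlt : ∀ w : Fin d → ℝ, (∀ k, 0 < w k) → Λ1 w < Λ2 w) :
    ∃ ε : ℝ, 0 < ε ∧
      ∀ t ∈ Icc (0:ℝ) ε, C1 (fun _ => t) ≤ C2 (fun _ => t) := by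
  have h1 := hT1 (fun _ => 1) (fun _ => zero_le_one)
  have h2 := hT2 (fun _ => 1) (fun _ => zero_le_one)
  have hL : Λ1 (fun _ => 1) < Λ2 (fun _ => 1) := hlt _ (fun _ => one_pos)
  have hev : ∀ᶠ s in nhdsWithin (0:ℝ) (Ioi 0),
      C1 (fun k => s * 1) / s < C2 (fun k => s * 1) / s := h1.eventually_lt h2 hL
  rw [eventually_nhdsWithin_iff, Metric.eventually_nhds_iff] at hev
  obtain ⟨a, ha, haev⟩ := hev
  refine ⟨a / 2, by linarith, fun t ht => ?_⟩
  rcases eq_or_lt_of_le ht.1 with h0 | h0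
  · have e1 : C1 (fun _ => t) = 0 := by
      exact hC1.2.1 _ (fun k => ⟨ht.1, by linarith [ht.2]⟩) ⟨⟨0, hd⟩, h0.symm⟩
    have e2 : 0 ≤ C2 (fun _ => t) := by
      have := hC2.1 (fun _ => t) (fun k => ⟨ht.1, by linarith [ht.2]⟩)
      exact this.1
    rw [e1]; exact e2
  · have hta : dist t (0:ℝ) < a := by
      rw [Real.dist_eq, sub_zero, abs_of_pos h0]; linarith [ht.2]
    have := haev hta h0
    simp only [mul_one] at this
    have := (div_lt_div_iff_of_pos_right h0).mp this
    linarith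
end

section
/- Let C1 and C2 be bivariate Fredricks–Nelsen copulas, i.e. C_i(u1,u2) = min{u1, u2, (δ_i(u1) + δ_i(u2))/2} where δ_i is the diagonal section of some 2-copula, and suppose each C_i admits a tail dependence function. If C1 <_Λ C2 (i.e. Λ(w; C1) < Λ(w; C2) for all w ∈ (0,∞)²), then C1 ≤_loc C2, i.e. there exists ε > 0 such that C1(u) ≤ C2(u) for all u ∈ [0,1]² with ‖u‖ < ε. -/
open Filter Set

/-- A bivariate copula: grounded, uniform margins, 2-increasing. -/
def IsCopula2 (C : ℝ → ℝ → ℝ) : Prop :=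
  (∀ u ∈ Icc (0:ℝ) 1, C u 0 = 0 ∧ C 0 u = 0) ∧
  (∀ u ∈ Icc (0:ℝ) 1, C u 1 = u ∧ C 1 u = u) ∧
  (∀ a1 b1 a2 b2 : ℝ, 0 ≤ a1 → a1 ≤ b1 → b1 ≤ 1 → 0 ≤ a2 → a2 ≤ b2 → b2 ≤ 1 →
    0 ≤ C b1 b2 - C a1 b2 - C b1 a2 + C a1 a2)

/-- The (lower) tail dependence function of a bivariate copula. -/
def HasTDF2 (C : ℝ → ℝ → ℝ) (Λ : ℝ → ℝ → ℝ) : Prop :=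
  ∀ w1 w2 : ℝ, 0 ≤ w1 → 0 ≤ w2 →
    Tendsto (fun s : ℝ => C (s * w1) (s * w2) / s) (nhdsWithin 0 (Ioi 0)) (nhds (Λ w1 w2))

/-- `δ` is the diagonal section of some 2-copula. -/
def IsDiagonal (δ : ℝ → ℝ) : Prop :=
  ∃ D : ℝ → ℝ → ℝ, IsCopula2 D ∧ ∀ t ∈ Icc (0:ℝ) 1, δ t = D t t

/-- For Fredricks–Nelsen copulas, the strict tail dependence order implies
local stochastic dominance. -/
theorem stmt8 (δ1 δ2 : ℝ → ℝ) (hδ1 : IsDiagonal δ1) (hδ2 : IsDiagonal δ2)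
    (C1 C2 Λ1 Λ2 : ℝ → ℝ → ℝ)
    (hC1 : ∀ u1 u2 : ℝ, C1 u1 u2 = min u1 (min u2 ((δ1 u1 + δ1 u2) / 2)))
    (hC2 : ∀ u1 u2 : ℝ, C2 u1 u2 = min u1 (min u2 ((δ2 u1 + δ2 u2) / 2)))
    (hT1 : HasTDF2 C1 Λ1) (hT2 : HasTDF2 C2 Λ2)
    (hlt : ∀ w1 w2 : ℝ, 0 < w1 → 0 < w2 → Λ1 w1 w2 < Λ2 w1 w2) :
    ∃ ε : ℝ, 0 < ε ∧
      ∀ u1 u2 : ℝ, u1 ∈ Icc (0:ℝ) 1 → u2 ∈ Icc (0:ℝ) 1 → ‖(u1, u2)‖ < ε →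
        C1 u1 u2 ≤ C2 u1 u2 := by
  obtain ⟨D1, hD1, hd1⟩ := hδ1
  obtain ⟨D2, hD2, hd2⟩ := hδ2
  have hδ10 : δ1 0 = 0 := by
    rw [hd1 0 (by norm_num)]; exact (hD1.1 0 (by norm_num)).1
  have hδ20 : δ2 0 = 0 := by
    rw [hd2 0 (by norm_num)]; exact (hD2.1 0 (by norm_num)).1
  have hlim1 := hT1 1 1 zero_le_one zero_le_one
  have hlim2 := hT2 1 1 zero_le_one zero_le_one
  have hev : ∀ᶠ s in nhdsWithin 0 (Ioi 0),
      C1 (s * 1) (s * 1) / s < C2 (s * 1) (s * 1) / s :=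
    hlim1.eventually_lt hlim2 (hlt 1 1 one_pos one_pos)
  rw [eventually_nhdsWithin_iff, Metric.eventually_nhds_iff] at hev
  obtain ⟨ε0, hε0, hev⟩ := hev
  refine ⟨min ε0 1, lt_min hε0 one_pos, ?_⟩
  have key : ∀ t : ℝ, 0 ≤ t → t < min ε0 1 → δ1 t ≤ δ2 t := by
    intro t ht htε
    rcases eq_or_lt_of_le ht with h0 | h0
    · rw [← h0, hδ10, hδ20]
    · have hd : dist t 0 < ε0 := by
        rw [Real.dist_eq, sub_zero, abs_of_pos h0]
        exact htε.trans_le (min_le_left _ _)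
      have h := hev hd h0
      rw [hC1, hC2] at h
      simp only [mul_one, add_self_div_two, min_self] at h
      have h' : min t (δ1 t) < min t (δ2 t) := by
        rwa [div_lt_div_iff_of_pos_right h0, ← min_assoc, min_self, ← min_assoc,
          min_self] at h
      have h1 : min t (δ1 t) = δ1 t := by
        rcases min_cases t (δ1 t) with ⟨he, hle⟩ | ⟨he, _⟩
        · exfalso; rw [he] at h'; exact absurd (min_le_left t (δ2 t)) (not_le.2 h')
        · exact he
      rw [h1] at h'
      exact h'.le.trans (min_le_right _ _)
  intro u1 u2 hu1 hu2 hn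
  rw [Prod.norm_def] at hn
  have hn1 : u1 < min ε0 1 := by
    have := (le_max_left ‖u1‖ ‖u2‖).trans_lt hn
    rwa [Real.norm_eq_abs, abs_of_nonneg hu1.1] at this
  have hn2 : u2 < min ε0 1 := by
    have := (le_max_right ‖u1‖ ‖u2‖).trans_lt hn
    rwa [Real.norm_eq_abs, abs_of_nonneg hu2.1] at this
  have k1 := key u1 hu1.1 hn1
  have k2 := key u2 hu2.1 hn2
  rw [hC1, hC2]
  exact min_le_min le_rfl (min_le_min le_rfl (by linarith))
end

section
/- Let C1 and C2 be bivariate Bertino copulas, i.e. C_i(u1,u2) = min(u1,u2) − min_{t ∈ [min(u1,u2), max(u1,u2)]} (t − δ_i(t)) where δ_i is the diagonal section of some 2-copula, and suppose each C_i admits a tail dependence function. If C1 <_Λ C2 (i.e. Λ(w; C1) < Λ(w; C2) for all w ∈ (0,∞)²), then C1 ≤_loc C2, i.e. there exists ε > 0 such that C1(u) ≤ C2(u) for all u ∈ [0,1]² with ‖u‖ < ε. -/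
open Filter Set

lemma diag_props (δ : ℝ → ℝ) (h : IsDiagonal δ) :
    δ 0 = 0 ∧ ∀ t ∈ Icc (0:ℝ) 1, δ t ≤ t := by
  obtain ⟨D, ⟨hg, hm, h2⟩, hδ⟩ := h
  have h01 : (0:ℝ) ∈ Icc (0:ℝ) 1 := ⟨le_refl 0, zero_le_one⟩
  have h11 : (1:ℝ) ∈ Icc (0:ℝ) 1 := ⟨zero_le_one, le_refl 1⟩
  constructor
  · rw [hδ 0 h01, (hg 0 h01).1]
  · intro t ht
    have key := h2 0 t t 1 le_rfl ht.1 ht.2 ht.1 ht.2 le_rfl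
    have e1 : D t 1 = t := (hm t ht).1
    have e2 : D 0 1 = 0 := (hg 1 h11).2
    have e3 : D 0 t = 0 := (hg t ht).2
    rw [hδ t ht]
    linarith

/-- For Bertino copulas, the strict tail dependence order implies local
stochastic dominance. -/
theorem stmt9 (δ1 δ2 : ℝ → ℝ) (hδ1 : IsDiagonal δ1) (hδ2 : IsDiagonal δ2)
    (C1 C2 Λ1 Λ2 : ℝ → ℝ → ℝ)
    (hC1 : ∀ u1 u2 : ℝ, C1 u1 u2 =
      min u1 u2 - sInf ((fun t => t - δ1 t) '' Icc (min u1 u2) (max u1 u2)))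
    (hC2 : ∀ u1 u2 : ℝ, C2 u1 u2 =
      min u1 u2 - sInf ((fun t => t - δ2 t) '' Icc (min u1 u2) (max u1 u2)))
    (hT1 : HasTDF2 C1 Λ1) (hT2 : HasTDF2 C2 Λ2)
    (hlt : ∀ w1 w2 : ℝ, 0 < w1 → 0 < w2 → Λ1 w1 w2 < Λ2 w1 w2) :
    ∃ ε : ℝ, 0 < ε ∧
      ∀ u1 u2 : ℝ, u1 ∈ Icc (0:ℝ) 1 → u2 ∈ Icc (0:ℝ) 1 → ‖(u1, u2)‖ < ε →
        C1 u1 u2 ≤ C2 u1 u2 := by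
  obtain ⟨hδ1z, hδ1le⟩ := diag_props δ1 hδ1
  obtain ⟨hδ2z, hδ2le⟩ := diag_props δ2 hδ2
  have h1 := hT1 1 1 zero_le_one zero_le_one
  have h2 := hT2 1 1 zero_le_one zero_le_one
  have hev : ∀ᶠ s in nhdsWithin (0:ℝ) (Ioi 0),
      C1 (s*1) (s*1) / s < C2 (s*1) (s*1) / s :=
    h1.eventually_lt h2 (hlt 1 1 one_pos one_pos)
  have hev2 : ∀ᶠ s in nhdsWithin (0:ℝ) (Ioi 0), δ1 s ≤ δ2 s := by
    filter_upwards [hev, self_mem_nhdsWithin] with s hs hs0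
    have hs' : (0:ℝ) < s := hs0
    have e1 : C1 (s*1) (s*1) = s - (s - δ1 s) := by
      rw [hC1]; simp
    have e2 : C2 (s*1) (s*1) = s - (s - δ2 s) := by
      rw [hC2]; simp
    rw [e1, e2] at hs
    have := (div_lt_div_iff_of_pos_right hs').mp hs
    linarith
  have hmem : {s : ℝ | δ1 s ≤ δ2 s} ∈ nhdsWithin (0:ℝ) (Ioi 0) := hev2
  obtain ⟨ε, hε, hball⟩ := Metric.mem_nhdsWithin_iff.mp hmem
  refine ⟨ε, hε, ?_⟩
  intro u1 u2 hu1 hu2 hnorm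
  set m := min u1 u2 with hm
  set M := max u1 u2 with hM
  have hmM : m ≤ M := min_le_max
  have hm0 : 0 ≤ m := le_min hu1.1 hu2.1
  have hM1 : M ≤ 1 := max_le hu1.2 hu2.2
  have hMε : M < ε := by
    have : ‖(u1, u2)‖ = max ‖u1‖ ‖u2‖ := rfl
    rw [this, Real.norm_eq_abs, Real.norm_eq_abs] at hnorm
    calc M ≤ max |u1| |u2| := max_le_max (le_abs_self u1) (le_abs_self u2)
      _ < ε := hnorm
  -- pointwise comparison on Icc m M
  have key : ∀ t ∈ Icc m M, t - δ2 t ≤ t - δ1 t := by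
    intro t ht
    have ht0 : 0 ≤ t := hm0.trans ht.1
    rcases eq_or_lt_of_le ht0 with h | h
    · rw [← h, hδ1z, hδ2z]
    · have htε : t < ε := lt_of_le_of_lt ht.2 hMε
      have : t ∈ Metric.ball (0:ℝ) ε ∩ Ioi 0 := by
        constructor
        · simp [abs_of_pos h, htε, Real.dist_eq]
        · exact h
      have h12 : δ1 t ≤ δ2 t := hball this
      linarith
  have hIcc01 : Icc m M ⊆ Icc (0:ℝ) 1 := fun t ht => ⟨hm0.trans ht.1, ht.2.trans hM1⟩
  have hne : (Icc m M).Nonempty := ⟨m, le_rfl, hmM⟩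
  have hbdd : BddBelow ((fun t => t - δ2 t) '' Icc m M) := by
    refine ⟨0, ?_⟩
    rintro x ⟨t, ht, rfl⟩
    have := hδ2le t (hIcc01 ht)
    show (0:ℝ) ≤ t - δ2 t
    linarith
  have hinf : sInf ((fun t => t - δ2 t) '' Icc m M) ≤
      sInf ((fun t => t - δ1 t) '' Icc m M) := by
    apply le_csInf (hne.image _)
    rintro b ⟨t, ht, rfl⟩
    calc sInf ((fun t => t - δ2 t) '' Icc m M) ≤ t - δ2 t :=
          csInf_le hbdd ⟨t, ht, rfl⟩
      _ ≤ t - δ1 t := key t ht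
  rw [hC1, hC2]
  have : min u1 u2 = m := rfl
  linarith [hinf]
end

section
/- Let δ : [0,1] → [0,1] be the diagonal section of some 2-copula such that t ↦ δ(t)/t is increasing on (0,1] and t ↦ δ(t)/t² is decreasing on (0,1], and let C_SL be the associated semilinear copula C_SL(u1,u2) = min(u1,u2)·δ(max(u1,u2))/max(u1,u2) (with C_SL(0,0) = 0). Then the limit c := lim_{t↓0} δ(t)/t exists, C_SL admits a tail dependence function, and Λ(w1, w2; C_SL) = min(w1, w2)·c for all (w1,w2) ∈ [0,∞)². -/
open Filter Set

/-!
For `s > 0` the semilinear copula scales as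
`C_SL(s w₁, s w₂) / s = min w₁ w₂ · δ(s M) / (s M)` with `M = max w₁ w₂`, so the tail
dependence function is `min w₁ w₂` times the limit of `δ(t)/t` at `0⁺`. That limit exists
because `δ(t)/t` is monotone on `(0,1]` and bounded below by `0`, a diagonal being nonnegative.
-/

open Topology

theorem IsCopula2.nonneg {D : ℝ → ℝ → ℝ} (hD : IsCopula2 D) {u v : ℝ}
    (hu : u ∈ Icc (0:ℝ) 1) (hv : v ∈ Icc (0:ℝ) 1) : 0 ≤ D u v := by
  obtain ⟨hground, -, hinc⟩ := hD
  have hrect := hinc 0 u 0 v le_rfl hu.1 hu.2 le_rfl hv.1 hv.2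
  linarith [(hground u hu).1, (hground v hv).2, (hground 0 ⟨le_rfl, zero_le_one⟩).1]

theorem IsDiagonal.nonneg {δ : ℝ → ℝ} (hδ : IsDiagonal δ) {t : ℝ} (ht : t ∈ Icc (0:ℝ) 1) :
    0 ≤ δ t := by
  obtain ⟨D, hD, hdiag⟩ := hδ
  exact hdiag t ht ▸ hD.nonneg ht ht

theorem IsDiagonal.exists_tendsto_div_self {δ : ℝ → ℝ} (hδ : IsDiagonal δ)
    (hmono : MonotoneOn (fun t => δ t / t) (Ioc (0:ℝ) 1)) :
    ∃ c : ℝ, Tendsto (fun t => δ t / t) (𝓝[>] 0) (𝓝 c) := by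
  have hbdd : BddBelow ((fun t => δ t / t) '' Ioo (0:ℝ) 1) := by
    refine ⟨0, ?_⟩
    rintro _ ⟨t, ht, rfl⟩
    exact div_nonneg (hδ.nonneg ⟨ht.1.le, ht.2.le⟩) ht.1.le
  exact ⟨_, (hmono.mono Ioo_subset_Ioc_self).tendsto_nhdsWithin_Ioo_right
    (nonempty_Ioo.mpr zero_lt_one) hbdd⟩

theorem tendsto_mul_const_nhdsGT_zero {𝕜 : Type*} [Field 𝕜] [LinearOrder 𝕜]
    [IsStrictOrderedRing 𝕜] [TopologicalSpace 𝕜] [OrderTopology 𝕜] {M : 𝕜} (hM : 0 < M) :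
    Tendsto (fun s => s * M) (𝓝[>] 0) (𝓝[>] 0) := by
  simp_rw [mul_comm _ M]
  exact tendsto_iff_comap.mpr (comap_mulLeft_nhdsGT_zero hM).ge

theorem div_eq_min_mul_of_semilinear {δ : ℝ → ℝ} {C : ℝ → ℝ → ℝ}
    (hC : ∀ u1 u2 : ℝ, ¬(u1 = 0 ∧ u2 = 0) →
      C u1 u2 = min u1 u2 * δ (max u1 u2) / max u1 u2)
    {s w1 w2 : ℝ} (hs : 0 < s) (hM : 0 < max w1 w2) :
    C (s * w1) (s * w2) / s = min w1 w2 * (δ (s * max w1 w2) / (s * max w1 w2)) := by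
  have hnz : ¬(s * w1 = 0 ∧ s * w2 = 0) := by
    rintro ⟨h1, h2⟩
    rw [(mul_eq_zero.mp h1).resolve_left hs.ne', (mul_eq_zero.mp h2).resolve_left hs.ne',
      max_self] at hM
    exact hM.false
  rw [hC _ _ hnz, ← mul_min_of_nonneg _ _ hs.le, ← mul_max_of_nonneg _ _ hs.le]
  field_simp

theorem stmt10_general (δ : ℝ → ℝ) (hδ : IsDiagonal δ)
    (hmono : MonotoneOn (fun t => δ t / t) (Ioc (0:ℝ) 1))
    (C : ℝ → ℝ → ℝ)
    (hC : ∀ u1 u2 : ℝ, ¬(u1 = 0 ∧ u2 = 0) →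
      C u1 u2 = min u1 u2 * δ (max u1 u2) / max u1 u2)
    (hC0 : C 0 0 = 0) :
    ∃ c : ℝ, Tendsto (fun t : ℝ => δ t / t) (nhdsWithin 0 (Ioi 0)) (nhds c) ∧
      ∀ w1 w2 : ℝ, 0 ≤ w1 → 0 ≤ w2 →
        Tendsto (fun s : ℝ => C (s * w1) (s * w2) / s) (nhdsWithin 0 (Ioi 0))
          (nhds (min w1 w2 * c)) := by
  obtain ⟨c, hc⟩ := hδ.exists_tendsto_div_self hmono
  refine ⟨c, hc, fun w1 w2 hw1 hw2 => ?_⟩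
  rcases (le_max_of_le_left hw1 : 0 ≤ max w1 w2).eq_or_lt with hM | hM
  · obtain ⟨rfl, rfl⟩ : w1 = 0 ∧ w2 = 0 := by
      obtain ⟨h1, h2⟩ := max_le_iff.mp hM.ge
      exact ⟨le_antisymm h1 hw1, le_antisymm h2 hw2⟩
    simp [hC0]
  · have hscale : ∀ᶠ s in 𝓝[>] 0, min w1 w2 * (δ (s * max w1 w2) / (s * max w1 w2)) =
        C (s * w1) (s * w2) / s :=
      eventually_mem_nhdsWithin.mono fun s hs => (div_eq_min_mul_of_semilinear hC hs hM).symm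
    exact ((hc.comp (tendsto_mul_const_nhdsGT_zero hM)).const_mul _).congr' hscale

/-- The semilinear copula of a diagonal `δ` (with `δ(t)/t` increasing and
`δ(t)/t²` decreasing on `(0,1]`) admits the tail dependence function
`Λ(w1,w2) = min w1 w2 · lim_{t↓0} δ(t)/t`. -/
theorem stmt10 (δ : ℝ → ℝ) (hδ : IsDiagonal δ)
    (hmono : MonotoneOn (fun t => δ t / t) (Ioc (0:ℝ) 1))
    (hanti : AntitoneOn (fun t => δ t / t ^ 2) (Ioc (0:ℝ) 1))
    (C : ℝ → ℝ → ℝ)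
    (hC : ∀ u1 u2 : ℝ, ¬(u1 = 0 ∧ u2 = 0) →
      C u1 u2 = min u1 u2 * δ (max u1 u2) / max u1 u2)
    (hC0 : C 0 0 = 0) :
    ∃ c : ℝ, Tendsto (fun t : ℝ => δ t / t) (nhdsWithin 0 (Ioi 0)) (nhds c) ∧
      ∀ w1 w2 : ℝ, 0 ≤ w1 → 0 ≤ w2 →
        Tendsto (fun s : ℝ => C (s * w1) (s * w2) / s) (nhdsWithin 0 (Ioi 0))
          (nhds (min w1 w2 * c)) :=
  stmt10_general δ hδ hmono C hC hC0
end

section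
/- Let C1 and C2 be semilinear copulas, i.e. C_i(u1,u2) = min(u1,u2)·δ_i(max(u1,u2))/max(u1,u2) where δ_i is the diagonal section of some 2-copula with δ_i(t)/t increasing and δ_i(t)/t² decreasing on (0,1]. If C1 <_Λ C2 (i.e. Λ(w; C1) < Λ(w; C2) for all w ∈ (0,∞)²), then C1 ≤_loc C2, i.e. there exists ε > 0 such that C1(u) ≤ C2(u) for all u ∈ [0,1]² with ‖u‖ < ε. -/
open Filter Set

/-- For semilinear copulas, the strict tail dependence order implies local
stochastic dominance. -/
theorem stmt11 (δ1 δ2 : ℝ → ℝ) (hδ1 : IsDiagonal δ1) (hδ2 : IsDiagonal δ2)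
    (hmono1 : MonotoneOn (fun t => δ1 t / t) (Ioc (0:ℝ) 1))
    (hanti1 : AntitoneOn (fun t => δ1 t / t ^ 2) (Ioc (0:ℝ) 1))
    (hmono2 : MonotoneOn (fun t => δ2 t / t) (Ioc (0:ℝ) 1))
    (hanti2 : AntitoneOn (fun t => δ2 t / t ^ 2) (Ioc (0:ℝ) 1))
    (C1 C2 Λ1 Λ2 : ℝ → ℝ → ℝ)
    (hC1 : ∀ u1 u2 : ℝ, ¬(u1 = 0 ∧ u2 = 0) →
      C1 u1 u2 = min u1 u2 * δ1 (max u1 u2) / max u1 u2)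
    (hC10 : C1 0 0 = 0)
    (hC2 : ∀ u1 u2 : ℝ, ¬(u1 = 0 ∧ u2 = 0) →
      C2 u1 u2 = min u1 u2 * δ2 (max u1 u2) / max u1 u2)
    (hC20 : C2 0 0 = 0)
    (hT1 : HasTDF2 C1 Λ1) (hT2 : HasTDF2 C2 Λ2)
    (hlt : ∀ w1 w2 : ℝ, 0 < w1 → 0 < w2 → Λ1 w1 w2 < Λ2 w1 w2) :
    ∃ ε : ℝ, 0 < ε ∧
      ∀ u1 u2 : ℝ, u1 ∈ Icc (0:ℝ) 1 → u2 ∈ Icc (0:ℝ) 1 → ‖(u1, u2)‖ < ε →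
        C1 u1 u2 ≤ C2 u1 u2 := by

  have hev1 : ∀ᶠ s in nhdsWithin (0:ℝ) (Ioi 0), C1 (s*1) (s*1) / s = δ1 s / s := by
    filter_upwards [self_mem_nhdsWithin] with s hs
    have hs0 : s ≠ 0 := ne_of_gt hs
    have : s * δ1 s / s = δ1 s := by field_simp
    rw [mul_one, hC1 s s (fun h => hs0 h.1), max_self, min_self, this]
  have hev2 : ∀ᶠ s in nhdsWithin (0:ℝ) (Ioi 0), C2 (s*1) (s*1) / s = δ2 s / s := by
    filter_upwards [self_mem_nhdsWithin] with s hs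
    have hs0 : s ≠ 0 := ne_of_gt hs
    have : s * δ2 s / s = δ2 s := by field_simp
    rw [mul_one, hC2 s s (fun h => hs0 h.1), max_self, min_self, this]
  have td1 : Tendsto (fun s : ℝ => δ1 s / s) (nhdsWithin 0 (Ioi 0)) (nhds (Λ1 1 1)) :=
    (hT1 1 1 zero_le_one zero_le_one).congr' hev1
  have td2 : Tendsto (fun s : ℝ => δ2 s / s) (nhdsWithin 0 (Ioi 0)) (nhds (Λ2 1 1)) :=
    (hT2 1 1 zero_le_one zero_le_one).congr' hev2
  have hlt12 : Λ1 1 1 < Λ2 1 1 := hlt 1 1 one_pos one_pos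
  -- L2 is a lower bound for δ2 t / t on (0,1]
  have key2 : ∀ M ∈ Ioc (0:ℝ) 1, Λ2 1 1 ≤ δ2 M / M := by
    intro M hM
    refine le_of_tendsto td2 ?_
    filter_upwards [self_mem_nhdsWithin,
      (eventually_lt_nhds hM.1).filter_mono nhdsWithin_le_nhds] with s hs hsM
    exact hmono2 ⟨hs, le_trans hsM.le hM.2⟩ hM hsM.le
  -- pick ε with δ1 ε / ε < Λ2 1 1
  have hev : ∀ᶠ s in nhdsWithin (0:ℝ) (Ioi 0),
      δ1 s / s < Λ2 1 1 ∧ s ∈ Ioi (0:ℝ) ∧ s < 1 := by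
    filter_upwards [td1.eventually (eventually_lt_nhds hlt12), self_mem_nhdsWithin,
      (eventually_lt_nhds one_pos).filter_mono nhdsWithin_le_nhds] with s h1 h2 h3
    exact ⟨h1, h2, h3⟩
  obtain ⟨ε, hεlt, hεpos, hε1⟩ := hev.exists
  have hεIoc : ε ∈ Ioc (0:ℝ) 1 := ⟨hεpos, hε1.le⟩
  refine ⟨ε, hεpos, fun u1 u2 hu1 hu2 hnorm => ?_⟩
  by_cases h0 : u1 = 0 ∧ u2 = 0
  · rw [h0.1, h0.2, hC10, hC20]
  · set M := max u1 u2 with hMdef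
    have hMpos : 0 < M := by
      rcases lt_or_eq_of_le hu1.1 with h | h
      · exact lt_of_lt_of_le h (le_max_left _ _)
      · rcases lt_or_eq_of_le hu2.1 with h' | h'
        · exact lt_of_lt_of_le h' (le_max_right _ _)
        · exact absurd ⟨h.symm, h'.symm⟩ h0
    have hMle : M < ε := by
      have h1 : M ≤ ‖(u1, u2)‖ := by
        have : ‖(u1, u2)‖ = max ‖u1‖ ‖u2‖ := rfl
        rw [this, Real.norm_eq_abs, Real.norm_eq_abs]
        exact max_le_max (le_abs_self _) (le_abs_self _)
      exact lt_of_le_of_lt h1 hnorm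
    have hMIoc : M ∈ Ioc (0:ℝ) 1 := ⟨hMpos, max_le hu1.2 hu2.2⟩
    have hchain : δ1 M / M ≤ δ2 M / M := by
      calc δ1 M / M ≤ δ1 ε / ε := hmono1 hMIoc hεIoc hMle.le
        _ ≤ Λ2 1 1 := hεlt.le
        _ ≤ δ2 M / M := key2 M hMIoc
    rw [hC1 u1 u2 h0, hC2 u1 u2 h0, mul_div_assoc, mul_div_assoc]
    exact mul_le_mul_of_nonneg_left hchain (le_min hu1.1 hu2.1)
end

section
/- Let Λ be a bivariate tail dependence function and let C^LEV(·; Λ) be the corresponding lower extreme value copula. Then for every w ∈ [0,∞)², the limit lim_{s↓0} C^LEV(sw1, sw2; Λ)/s exists and equals Λ(w1, w2); i.e. the tail dependence function of C^LEV(·; Λ) is Λ itself. -/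
/-!
With `x_i(s) = -log (1 - s w_i)` and the homogeneity of `Λ`,
`C^LEV(s w) = s w1 + s w2 - 1 + exp (s y(s))` where `y(s) = -x_1/s - x_2/s + Λ(x_1/s, x_2/s)`.
As `x_i(s)/s → w_i` and `Λ` is continuous on the closed quadrant (its Pickands function is
concave, hence continuous inside `[0,1]`, and squeezed to `0` at the endpoints), `y(s)` tends to
`Λ(w) - w1 - w2`; the derivative of `exp` at `0` then gives
`C^LEV(s w)/s = w1 + w2 + (exp (s y(s)) - 1)/s → Λ(w)`.
-/

open Filter Set

/-- A bivariate tail dependence function: `Λ(w1,w2) = (w1+w2)·A(w1/(w1+w2))` for a concave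
`A : [0,1] → [0,1/2]` with `0 ≤ A(t) ≤ min t (1-t)`. -/
def IsBivariateTDF (Λ : ℝ → ℝ → ℝ) : Prop :=
  ∃ A : ℝ → ℝ, ConcaveOn ℝ (Icc (0:ℝ) 1) A ∧
    (∀ t ∈ Icc (0:ℝ) 1, 0 ≤ A t ∧ A t ≤ min t (1 - t)) ∧
    Λ 0 0 = 0 ∧
    (∀ w1 w2 : ℝ, 0 ≤ w1 → 0 ≤ w2 → (w1, w2) ≠ (0, 0) →
      Λ w1 w2 = (w1 + w2) * A (w1 / (w1 + w2)))

/-- The extreme value copula of a bivariate tail dependence function `Λ`. -/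
noncomputable def CEV (Λ : ℝ → ℝ → ℝ) (u1 u2 : ℝ) : ℝ :=
  if 0 < u1 ∧ 0 < u2 then
    Real.exp (Real.log u1 + Real.log u2 + Λ (-Real.log u1) (-Real.log u2))
  else 0

/-- The lower extreme value copula of a bivariate tail dependence function `Λ`
(the survival copula of `CEV Λ`). -/
noncomputable def CLEV (Λ : ℝ → ℝ → ℝ) (u1 u2 : ℝ) : ℝ :=
  u1 + u2 - 1 + CEV Λ (1 - u1) (1 - u2)

open Topology Real

theorem tendsto_comp_mul_div {f : ℝ → ℝ} {f' c : ℝ} {y : ℝ → ℝ} {l : Filter ℝ}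
    (hl : l ≤ 𝓝[≠] 0) (hf : HasDerivAt f f' 0) (hf0 : f 0 = 0) (hy : Tendsto y l (𝓝 c)) :
    Tendsto (fun s => f (s * y s) / s) l (𝓝 (c * f')) := by
  have hsy : Tendsto (fun s => s * y s) l (𝓝 0) := by
    simpa using (tendsto_id.mono_left (hl.trans nhdsWithin_le_nhds)).mul hy
  have hslope : Tendsto (fun s => dslope f 0 (s * y s)) l (𝓝 f') := by
    have h := (continuousAt_dslope_same.2 hf.differentiableAt).tendsto.comp hsy
    rwa [dslope_same, hf.deriv] at h
  refine (hy.mul hslope).congr' ?_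
  filter_upwards [hl self_mem_nhdsWithin] with s (hs : s ≠ 0)
  have h := sub_smul_dslope f 0 (s * y s)
  rw [hf0, sub_zero, sub_zero, smul_eq_mul] at h
  rw [← h]
  field_simp [hs]

theorem tendsto_log_one_sub_mul_div (w : ℝ) :
    Tendsto (fun s => log (1 - s * w) / s) (𝓝[≠] 0) (𝓝 (-w)) := by
  have hf : HasDerivAt (fun u => log (1 - u)) (-1) 0 := by
    simpa using ((hasDerivAt_id (0:ℝ)).const_sub 1).log (by norm_num)
  simpa using tendsto_comp_mul_div le_rfl hf (by simp) (tendsto_const_nhds (x := w))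

theorem eventually_one_sub_mul_pos (w : ℝ) : ∀ᶠ s in 𝓝 (0:ℝ), 0 < 1 - s * w :=
  (continuous_const.sub (continuous_id.mul_const w)).continuousAt.eventually
    (lt_mem_nhds (by simp))

theorem tendsto_neg_log_one_sub_mul_div (w : ℝ) :
    Tendsto (fun s => -log (1 - s * w) / s) (𝓝[>] 0) (𝓝[≥] w) := by
  refine tendsto_nhdsWithin_iff.2 ⟨?_, ?_⟩
  · simpa [neg_div] using ((tendsto_log_one_sub_mul_div w).mono_left (nhdsGT_le_nhdsNE 0)).neg
  · filter_upwards [self_mem_nhdsWithin, nhdsWithin_le_nhds (eventually_one_sub_mul_pos w)]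
      with s (hs : 0 < s) hsw
    rw [mem_Ici, le_div_iff₀ hs]
    linarith [log_le_sub_one_of_pos hsw]

lemma div_add_mem_Icc {a b : ℝ} (ha : 0 ≤ a) (hb : 0 ≤ b) : a / (a + b) ∈ Icc (0:ℝ) 1 :=
  ⟨div_nonneg ha (add_nonneg ha hb),
    div_le_one_of_le₀ (le_add_of_nonneg_right hb) (add_nonneg ha hb)⟩

theorem ConcaveOn.continuousOn_Icc_of_le_min {A : ℝ → ℝ} (hA : ConcaveOn ℝ (Icc 0 1) A)
    (hAb : ∀ t ∈ Icc (0:ℝ) 1, 0 ≤ A t ∧ A t ≤ min t (1 - t)) :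
    ContinuousOn A (Icc 0 1) := by
  intro t ht
  by_cases hint : t ∈ Ioo 0 1
  · have hA' := hA.continuousOn_interior.continuousAt
      (by rw [interior_Icc]; exact Ioo_mem_nhds hint.1 hint.2)
    exact hA'.continuousWithinAt
  have hm : min t (1 - t) = 0 := by
    rcases ht.1.eq_or_lt with rfl | h0
    · simp
    rcases ht.2.eq_or_lt with rfl | h1
    · simp
    exact absurd ⟨h0, h1⟩ hint
  have hAt : A t = 0 := le_antisymm (hm ▸ (hAb t ht).2) (hAb t ht).1
  have hmin : Tendsto (fun u : ℝ => min u (1 - u)) (𝓝[Icc 0 1] t) (𝓝 0) := by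
    rw [← hm]; exact (continuous_id.min (continuous_const.sub continuous_id)).continuousWithinAt
  rw [ContinuousWithinAt, hAt]
  exact tendsto_of_tendsto_of_tendsto_of_le_of_le' tendsto_const_nhds hmin
    (eventually_nhdsWithin_of_forall fun u hu => (hAb u hu).1)
    (eventually_nhdsWithin_of_forall fun u hu => (hAb u hu).2)

namespace IsBivariateTDF

variable {Λ : ℝ → ℝ → ℝ}

theorem exists_continuousOn_eq (hΛ : IsBivariateTDF Λ) :
    ∃ A : ℝ → ℝ, ContinuousOn A (Icc 0 1) ∧ (∀ t ∈ Icc (0:ℝ) 1, 0 ≤ A t ∧ A t ≤ 1) ∧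
      ∀ a b : ℝ, 0 ≤ a → 0 ≤ b → Λ a b = (a + b) * A (a / (a + b)) := by
  obtain ⟨A, hA, hAb, h00, hrep⟩ := hΛ
  refine ⟨A, hA.continuousOn_Icc_of_le_min hAb,
    fun t ht => ⟨(hAb t ht).1,
      (hAb t ht).2.trans ((min_le_right _ _).trans (by linarith [ht.1]))⟩,
    fun a b ha hb => ?_⟩
  by_cases hab : (a, b) = (0, 0)
  · obtain ⟨rfl, rfl⟩ := Prod.mk.inj hab
    simp [h00]
  · exact hrep a b ha hb hab

theorem continuousOn (hΛ : IsBivariateTDF Λ) :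
    ContinuousOn (Function.uncurry Λ) (Ici 0 ×ˢ Ici 0) := by
  obtain ⟨A, hA, hAb, hrep⟩ := hΛ.exists_continuousOn_eq
  set g : ℝ × ℝ → ℝ := fun v => (v.1 + v.2) * A (v.1 / (v.1 + v.2))
  have hQ : ∀ v ∈ Ici (0:ℝ) ×ˢ Ici (0:ℝ), 0 ≤ v.1 ∧ 0 ≤ v.2 := fun v hv => hv
  refine ContinuousOn.congr (f := g) (fun w hw => ?_)
    fun v hv => hrep v.1 v.2 (hQ v hv).1 (hQ v hv).2
  obtain ⟨hw1, hw2⟩ := hQ w hw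
  rcases (add_nonneg hw1 hw2).eq_or_lt with hw0 | hw0
  · have hg : ∀ v ∈ Ici (0:ℝ) ×ˢ Ici (0:ℝ), 0 ≤ g v ∧ g v ≤ v.1 + v.2 := fun v hv => by
      obtain ⟨hv1, hv2⟩ := hQ v hv
      have hAv := hAb _ (div_add_mem_Icc hv1 hv2)
      exact ⟨mul_nonneg (add_nonneg hv1 hv2) hAv.1,
        mul_le_of_le_one_right (add_nonneg hv1 hv2) hAv.2⟩
    have hsum : Tendsto (fun v : ℝ × ℝ => v.1 + v.2) (𝓝[Ici 0 ×ˢ Ici 0] w) (𝓝 0) := by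
      rw [hw0]; exact (continuous_fst.add continuous_snd).continuousWithinAt
    rw [ContinuousWithinAt, show g w = 0 by simp [g, ← hw0]]
    exact tendsto_of_tendsto_of_tendsto_of_le_of_le' tendsto_const_nhds hsum
      (eventually_nhdsWithin_of_forall fun v hv => (hg v hv).1)
      (eventually_nhdsWithin_of_forall fun v hv => (hg v hv).2)
  · have hratio : ContinuousAt (fun v : ℝ × ℝ => v.1 / (v.1 + v.2)) w :=
      continuousAt_fst.div (continuousAt_fst.add continuousAt_snd) hw0.ne'
    have hAr : ContinuousWithinAt (fun v : ℝ × ℝ => A (v.1 / (v.1 + v.2)))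
        (Ici 0 ×ˢ Ici 0) w :=
      (hA _ (div_add_mem_Icc hw1 hw2)).comp (f := fun v : ℝ × ℝ => v.1 / (v.1 + v.2))
        hratio.continuousWithinAt fun v hv => div_add_mem_Icc (hQ v hv).1 (hQ v hv).2
    exact (continuous_fst.add continuous_snd).continuousWithinAt.mul hAr

theorem apply_mul_mul (hΛ : IsBivariateTDF Λ) {c a b : ℝ} (hc : 0 ≤ c) (ha : 0 ≤ a)
    (hb : 0 ≤ b) : Λ (c * a) (c * b) = c * Λ a b := by
  obtain ⟨A, -, -, hrep⟩ := hΛ.exists_continuousOn_eq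
  rw [hrep _ _ (mul_nonneg hc ha) (mul_nonneg hc hb), hrep a b ha hb, ← mul_add]
  rcases hc.eq_or_lt with rfl | hc
  · simp
  · rw [mul_div_mul_left _ _ hc.ne', mul_assoc]

theorem CLEV_mul_div (hΛ : IsBivariateTDF Λ) {s w1 w2 : ℝ}
    (hs : 0 < s) (hw1 : 0 ≤ w1) (hw2 : 0 ≤ w2) (h1 : 0 < 1 - s * w1) (h2 : 0 < 1 - s * w2) :
    CLEV Λ (s * w1) (s * w2) / s = w1 + w2 + (exp (s * (log (1 - s * w1) / s
      + log (1 - s * w2) / s + Λ (-log (1 - s * w1) / s) (-log (1 - s * w2) / s))) - 1) / s := by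
  have hx : ∀ w, 0 ≤ w → 0 < 1 - s * w → 0 ≤ -log (1 - s * w) / s := fun w hw hsw =>
    div_nonneg (neg_nonneg.2 (log_nonpos hsw.le (by nlinarith))) hs.le
  have hsx : ∀ a, s * (a / s) = a := fun a => mul_div_cancel₀ a hs.ne'
  rw [mul_add, mul_add, ← hΛ.apply_mul_mul hs.le (hx w1 hw1 h1) (hx w2 hw2 h2),
    hsx, hsx, hsx, hsx, CLEV, CEV, if_pos ⟨h1, h2⟩]
  field_simp
  ring

end IsBivariateTDF

/-- The tail dependence function of the lower extreme value copula
`CLEV Λ` is `Λ` itself. -/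
theorem stmt12 (Λ : ℝ → ℝ → ℝ) (hΛ : IsBivariateTDF Λ) :
    ∀ w1 w2 : ℝ, 0 ≤ w1 → 0 ≤ w2 →
      Tendsto (fun s : ℝ => CLEV Λ (s * w1) (s * w2) / s) (nhdsWithin 0 (Ioi 0))
        (nhds (Λ w1 w2)) := by
  intro w1 w2 hw1 hw2
  have hl : 𝓝[>] (0:ℝ) ≤ 𝓝[≠] 0 := nhdsGT_le_nhdsNE 0
  have hx : ∀ w : ℝ, 0 ≤ w →
      Tendsto (fun s => -log (1 - s * w) / s) (𝓝[>] 0) (𝓝[Ici 0] w) := fun w hw =>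
    (tendsto_neg_log_one_sub_mul_div w).mono_right (nhdsWithin_mono _ (Ici_subset_Ici.2 hw))
  have hxx : Tendsto (fun s => (-log (1 - s * w1) / s, -log (1 - s * w2) / s)) (𝓝[>] 0)
      (𝓝[Ici 0 ×ˢ Ici 0] (w1, w2)) := by
    rw [nhdsWithin_prod_eq]
    exact (hx w1 hw1).prodMk (hx w2 hw2)
  have hy : Tendsto (fun s => log (1 - s * w1) / s + log (1 - s * w2) / s
      + Λ (-log (1 - s * w1) / s) (-log (1 - s * w2) / s)) (𝓝[>] 0)
      (𝓝 (-w1 + -w2 + Λ w1 w2)) :=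
    (((tendsto_log_one_sub_mul_div w1).add (tendsto_log_one_sub_mul_div w2)).mono_left hl).add
      ((hΛ.continuousOn (w1, w2) ⟨hw1, hw2⟩).tendsto.comp hxx)
  have hlim := (tendsto_comp_mul_div hl ((hasDerivAt_exp 0).sub_const 1) (by simp) hy).const_add
    (w1 + w2)
  rw [exp_zero, mul_one, show w1 + w2 + (-w1 + -w2 + Λ w1 w2) = Λ w1 w2 by ring] at hlim
  refine hlim.congr' ?_
  filter_upwards [self_mem_nhdsWithin, nhdsWithin_le_nhds (eventually_one_sub_mul_pos w1),
    nhdsWithin_le_nhds (eventually_one_sub_mul_pos w2)] with s (hs : 0 < s) h1 h2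
  exact (hΛ.CLEV_mul_div hs hw1 hw2 h1 h2).symm
end

section
/- Let Λ1 and Λ2 be bivariate tail dependence functions with corresponding lower extreme value copulas C1 = C^LEV(·; Λ1) and C2 = C^LEV(·; Λ2). Then the following are equivalent: (1) Λ1(w) ≤ Λ2(w) for all w ∈ [0,∞)²; (2) C1(u) ≤ C2(u) for all u ∈ [0,1]²; (3) there exists ε > 0 such that C1(u) ≤ C2(u) for all u ∈ [0,1]² with ‖u‖ < ε. -/
open Filter Set

/-- Homogeneity of a bivariate tail dependence function. -/
lemma tdf_hom {Λ : ℝ → ℝ → ℝ} (h : IsBivariateTDF Λ) {c w1 w2 : ℝ} (hc : 0 < c)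
    (hw1 : 0 ≤ w1) (hw2 : 0 ≤ w2) : Λ (c * w1) (c * w2) = c * Λ w1 w2 := by
  obtain ⟨A, _, _, h00, hrep⟩ := h
  by_cases h0 : (w1, w2) = (0, 0)
  · obtain ⟨e1, e2⟩ := Prod.mk.injEq .. ▸ h0
    subst e1; subst e2
    simp [h00]
  · have h0' : (c * w1, c * w2) ≠ (0, 0) := by
      simp only [ne_eq, Prod.mk.injEq, not_and_or] at h0 ⊢
      rcases h0 with h | h
      · exact Or.inl (mul_ne_zero (ne_of_gt hc) h)
      · exact Or.inr (mul_ne_zero (ne_of_gt hc) h)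
    rw [hrep _ _ (by positivity) (by positivity) h0', hrep _ _ hw1 hw2 h0]
    have hsum : c * w1 + c * w2 = c * (w1 + w2) := by ring
    rw [hsum, mul_div_mul_left _ _ (ne_of_gt hc)]
    ring

lemma aux0 : True := trivial

/-- For lower extreme value 2-copulas, the tail dependence order, the lower
orthant order and the local lower orthant order are all equivalent. -/
theorem stmt13 (Λ1 Λ2 : ℝ → ℝ → ℝ) (h1 : IsBivariateTDF Λ1) (h2 : IsBivariateTDF Λ2) :
    ((∀ w1 w2 : ℝ, 0 ≤ w1 → 0 ≤ w2 → Λ1 w1 w2 ≤ Λ2 w1 w2) ↔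
      (∀ u1 u2 : ℝ, u1 ∈ Icc (0:ℝ) 1 → u2 ∈ Icc (0:ℝ) 1 →
        CLEV Λ1 u1 u2 ≤ CLEV Λ2 u1 u2)) ∧
    ((∀ u1 u2 : ℝ, u1 ∈ Icc (0:ℝ) 1 → u2 ∈ Icc (0:ℝ) 1 →
        CLEV Λ1 u1 u2 ≤ CLEV Λ2 u1 u2) ↔
      (∃ ε : ℝ, 0 < ε ∧
        ∀ u1 u2 : ℝ, u1 ∈ Icc (0:ℝ) 1 → u2 ∈ Icc (0:ℝ) 1 → ‖(u1, u2)‖ < ε →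
          CLEV Λ1 u1 u2 ≤ CLEV Λ2 u1 u2)) := by
  -- (1) → (2)
  have h12 : (∀ w1 w2 : ℝ, 0 ≤ w1 → 0 ≤ w2 → Λ1 w1 w2 ≤ Λ2 w1 w2) →
      (∀ u1 u2 : ℝ, u1 ∈ Icc (0:ℝ) 1 → u2 ∈ Icc (0:ℝ) 1 →
        CLEV Λ1 u1 u2 ≤ CLEV Λ2 u1 u2) := by
    intro hΛ u1 u2 hu1 hu2
    unfold CLEV CEV
    gcongr (u1 + u2 - 1 + ?_)
    by_cases hp : 0 < 1 - u1 ∧ 0 < 1 - u2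
    · rw [if_pos hp, if_pos hp]
      apply Real.exp_le_exp.mpr
      gcongr (_ + _ + ?_)
      apply hΛ
      · simp only [Left.nonneg_neg_iff]
        exact Real.log_nonpos (le_of_lt hp.1) (by linarith [hu1.1])
      · simp only [Left.nonneg_neg_iff]
        exact Real.log_nonpos (le_of_lt hp.2) (by linarith [hu2.1])
    · rw [if_neg hp, if_neg hp]
  -- (3) → (1)
  have h31 : (∃ ε : ℝ, 0 < ε ∧
      ∀ u1 u2 : ℝ, u1 ∈ Icc (0:ℝ) 1 → u2 ∈ Icc (0:ℝ) 1 → ‖(u1, u2)‖ < ε →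
        CLEV Λ1 u1 u2 ≤ CLEV Λ2 u1 u2) →
      (∀ w1 w2 : ℝ, 0 ≤ w1 → 0 ≤ w2 → Λ1 w1 w2 ≤ Λ2 w1 w2) := by
    rintro ⟨ε, hε, hloc⟩ w1 w2 hw1 hw2
    by_cases h0 : (w1, w2) = (0, 0)
    · obtain ⟨e1, e2⟩ := Prod.mk.injEq .. ▸ h0
      subst e1; subst e2
      obtain ⟨_, _, _, h001, _⟩ := h1
      obtain ⟨_, _, _, h002, _⟩ := h2
      rw [h001, h002]
    · set c : ℝ := ε / (2 * (w1 + w2 + 1)) with hc_def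
      have hden : (0:ℝ) < 2 * (w1 + w2 + 1) := by linarith
      have hc : 0 < c := div_pos hε hden
      set u1 : ℝ := 1 - Real.exp (-(c * w1)) with hu1_def
      set u2 : ℝ := 1 - Real.exp (-(c * w2)) with hu2_def
      have hbound : ∀ w : ℝ, 0 ≤ w → 0 ≤ 1 - Real.exp (-(c * w)) ∧
          1 - Real.exp (-(c * w)) ≤ c * w := by
        intro w hw
        constructor
        · have : Real.exp (-(c * w)) ≤ 1 := Real.exp_le_one_iff.mpr (by nlinarith)
          linarith
        · have := Real.add_one_le_exp (-(c * w))
          linarith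
      have hb1 := hbound w1 hw1
      have hb2 := hbound w2 hw2
      have hmem1 : u1 ∈ Icc (0:ℝ) 1 :=
        ⟨hb1.1, by have := Real.exp_pos (-(c * w1)); simp only [hu1_def]; linarith⟩
      have hmem2 : u2 ∈ Icc (0:ℝ) 1 :=
        ⟨hb2.1, by have := Real.exp_pos (-(c * w2)); simp only [hu2_def]; linarith⟩
      have hcw : c * (w1 + w2) < ε := by
        rw [hc_def, div_mul_eq_mul_div, div_lt_iff₀ hden]
        nlinarith
      have hnorm : ‖(u1, u2)‖ < ε := by
        rw [Prod.norm_def]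
        simp only [Real.norm_eq_abs]
        rw [abs_of_nonneg hb1.1, abs_of_nonneg hb2.1]
        apply max_lt
        · calc u1 ≤ c * w1 := hb1.2
            _ < ε := by nlinarith
        · calc u2 ≤ c * w2 := hb2.2
            _ < ε := by nlinarith
      have key := hloc u1 u2 hmem1 hmem2 hnorm
      unfold CLEV CEV at key
      have hpos : 0 < 1 - u1 ∧ 0 < 1 - u2 := by
        constructor
        · simp only [hu1_def]; have := Real.exp_pos (-(c * w1)); linarith
        · simp only [hu2_def]; have := Real.exp_pos (-(c * w2)); linarith
      rw [if_pos hpos, if_pos hpos] at key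
      have he1 : (1 : ℝ) - u1 = Real.exp (-(c * w1)) := by rw [hu1_def]; ring
      have he2 : (1 : ℝ) - u2 = Real.exp (-(c * w2)) := by rw [hu2_def]; ring
      rw [he1, he2, Real.log_exp, Real.log_exp, neg_neg, neg_neg] at key
      have key2 : Λ1 (c * w1) (c * w2) ≤ Λ2 (c * w1) (c * w2) := by
        have hexp : Real.exp (-(c * w1) + -(c * w2) + Λ1 (c * w1) (c * w2)) ≤
            Real.exp (-(c * w1) + -(c * w2) + Λ2 (c * w1) (c * w2)) := by linarith
        have := Real.exp_le_exp.mp hexp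
        linarith
      rw [tdf_hom h1 hc hw1 hw2, tdf_hom h2 hc hw1 hw2] at key2
      exact le_of_mul_le_mul_left key2 hc
  constructor
  · constructor
    · exact h12
    · intro h; exact h31 ⟨1, one_pos, fun u1 u2 hm1 hm2 _ => h u1 u2 hm1 hm2⟩
  · constructor
    · intro h; exact ⟨1, one_pos, fun u1 u2 hm1 hm2 _ => h u1 u2 hm1 hm2⟩
    · intro h; exact h12 (h31 h)
end

section
/- Let d ≥ 2 and let C be an Archimedean d-copula with a nonstrict generator φ (i.e. lim_{s↓0} φ(s) < ∞). Then there exists ε > 0 such that C(u) = 0 for all u ∈ [0,1]^d with ‖u‖ < ε; consequently, C has identically vanishing tail dependence function, and for every d-copula C̃ admitting a tail dependence function, C ≤_Λ C̃ holds if and only if C ≤_loc C̃ holds (and both always hold). -/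
open Filter Set

/-- An Archimedean generator: continuous, strictly decreasing on `(0,1]` with `φ(1) = 0`
(the value at `0` may be `∞`, i.e. `φ` may be unbounded near `0`). -/
def IsGenerator (φ : ℝ → ℝ) : Prop :=
  ContinuousOn φ (Ioc (0:ℝ) 1) ∧ StrictAntiOn φ (Ioc (0:ℝ) 1) ∧ φ 1 = 0

/-- A strict generator: `φ(s) → ∞` as `s ↓ 0`. -/
def IsStrictGenerator (φ : ℝ → ℝ) : Prop :=
  IsGenerator φ ∧ Tendsto φ (nhdsWithin 0 (Ioi 0)) atTop

/-- The generalized inverse `φ^{[-1]}(x) = inf {t ∈ (0,1] : φ(t) ≤ x}` (for a strict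
generator this is the ordinary inverse of `φ : (0,1] → [0,∞)`). -/
noncomputable def geninv (φ : ℝ → ℝ) (x : ℝ) : ℝ :=
  sInf {t | t ∈ Ioc (0:ℝ) 1 ∧ φ t ≤ x}

/-- `C` is the Archimedean `d`-copula generated by `φ`:
`C(u) = φ^{[-1]}(∑ₖ φ(uₖ))` on `(0,1]^d`, and `C(u) = 0` whenever some coordinate is `0`. -/
def IsArchimedean {d : ℕ} (C : (Fin d → ℝ) → ℝ) (φ : ℝ → ℝ) : Prop :=
  (∀ u : Fin d → ℝ, (∀ k, u k ∈ Ioc (0:ℝ) 1) → C u = geninv φ (∑ k, φ (u k))) ∧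
  (∀ u : Fin d → ℝ, (∀ k, u k ∈ Icc (0:ℝ) 1) → (∃ k, u k = 0) → C u = 0)

/-- `φ` is regularly varying at `0` with index `-α` (for `α ∈ [0,∞)`):
`φ(ts)/φ(s) → t^(-α)` as `s ↓ 0`, for every `t > 0`. -/
def RegVarAtZero (φ : ℝ → ℝ) (α : ℝ) : Prop :=
  ∀ t : ℝ, 0 < t →
    Tendsto (fun s : ℝ => φ (t * s) / φ s) (nhdsWithin 0 (Ioi 0)) (nhds (t ^ (-α)))

/-- `φ` is rapidly varying at `0` (index `-∞`): `φ(ts)/φ(s) → ∞` for `0 < t < 1` and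
`φ(ts)/φ(s) → 0` for `t > 1`, as `s ↓ 0`. -/
def RapidVarAtZero (φ : ℝ → ℝ) : Prop :=
  (∀ t : ℝ, 0 < t → t < 1 →
    Tendsto (fun s : ℝ => φ (t * s) / φ s) (nhdsWithin 0 (Ioi 0)) atTop) ∧
  (∀ t : ℝ, 1 < t →
    Tendsto (fun s : ℝ => φ (t * s) / φ s) (nhdsWithin 0 (Ioi 0)) (nhds 0))

/-- `φ` is regularly varying at `0` with index `-α` for the extended parameter
`α ∈ [0,∞]`. -/
def RegVarAtZeroE (φ : ℝ → ℝ) (α : ENNReal) : Prop :=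
  if α = ⊤ then RapidVarAtZero φ else RegVarAtZero φ α.toReal

/-- An Archimedean d-copula (d ≥ 2) with nonstrict generator vanishes in a
neighbourhood of the origin; hence its tail dependence function vanishes identically, and
for every d-copula `C'` admitting a tail dependence function, `C ≤_Λ C'` holds iff
`C ≤_loc C'` holds (and both always hold). -/
theorem stmt15 {d : ℕ} (hd : 2 ≤ d) (C : (Fin d → ℝ) → ℝ) (φ : ℝ → ℝ)
    (hC : IsCopula C) (hgen : IsGenerator φ) (harch : IsArchimedean C φ)
    (hns : ∃ L : ℝ, Tendsto φ (nhdsWithin 0 (Ioi 0)) (nhds L)) :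
    (∃ ε : ℝ, 0 < ε ∧ ∀ u : Fin d → ℝ, (∀ k, u k ∈ Icc (0:ℝ) 1) → ‖u‖ < ε → C u = 0) ∧
    HasTDF C (fun _ => 0) ∧
    ∀ C' Λ' : (Fin d → ℝ) → ℝ, IsCopula C' → HasTDF C' Λ' →
      ((∀ w : Fin d → ℝ, (∀ k, 0 ≤ w k) → (0:ℝ) ≤ Λ' w) ↔
        (∃ ε : ℝ, 0 < ε ∧
          ∀ u : Fin d → ℝ, (∀ k, u k ∈ Icc (0:ℝ) 1) → ‖u‖ < ε → C u ≤ C' u)) ∧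
      (∀ w : Fin d → ℝ, (∀ k, 0 ≤ w k) → (0:ℝ) ≤ Λ' w) ∧
      (∃ ε : ℝ, 0 < ε ∧
        ∀ u : Fin d → ℝ, (∀ k, u k ∈ Icc (0:ℝ) 1) → ‖u‖ < ε → C u ≤ C' u) := by
  obtain ⟨L, hL⟩ := hns
  have hanti := hgen.2.1
  have hφ1 := hgen.2.2
  -- φ t > 0 for t ∈ (0,1)
  have hφpos : ∀ t : ℝ, t ∈ Ioc (0:ℝ) 1 → t < 1 → 0 < φ t := by
    intro t ht ht1
    have := hanti ht ⟨zero_lt_one, le_refl 1⟩ ht1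
    rwa [hφ1] at this
  -- φ t ≤ L for t ∈ (0,1]
  have hle : ∀ t : ℝ, t ∈ Ioc (0:ℝ) 1 → φ t ≤ L := by
    intro t ht
    refine ge_of_tendsto hL ?_
    filter_upwards [Ioo_mem_nhdsGT_of_mem (⟨le_refl 0, ht.1⟩ : (0:ℝ) ∈ Ico 0 t)] with s hs
    exact le_of_lt (hanti ⟨hs.1, le_trans (le_of_lt hs.2) ht.2⟩ ht hs.2)
  -- L > 0
  have hLpos : 0 < L := by
    have h12 : (1/2 : ℝ) ∈ Ioc (0:ℝ) 1 := ⟨by norm_num, by norm_num⟩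
    exact lt_of_lt_of_le (hφpos _ h12 (by norm_num)) (hle _ h12)
  -- pick δ ∈ (0,1) with φ δ > L/2
  obtain ⟨δ, hδmem, hδφ⟩ : ∃ δ : ℝ, δ ∈ Ioo (0:ℝ) 1 ∧ L/2 < φ δ := by
    have h1 : ∀ᶠ s in nhdsWithin 0 (Ioi 0), L/2 < φ s :=
      hL.eventually (eventually_gt_nhds (by linarith))
    have h2 : Ioo (0:ℝ) 1 ∈ nhdsWithin 0 (Ioi 0) :=
      Ioo_mem_nhdsGT_of_mem ⟨le_refl 0, zero_lt_one⟩
    obtain ⟨s, hs1, hs2⟩ := (h1.and (eventually_of_mem h2 fun x hx => hx)).exists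
    exact ⟨s, hs2, hs1⟩
  -- the key vanishing property with ε = δ
  have key : ∀ u : Fin d → ℝ, (∀ k, u k ∈ Icc (0:ℝ) 1) → ‖u‖ < δ → C u = 0 := by
    intro u hu hnorm
    by_cases h0 : ∃ k, u k = 0
    · exact harch.2 u hu h0
    push_neg at h0
    have hmem : ∀ k, u k ∈ Ioc (0:ℝ) 1 := fun k =>
      ⟨lt_of_le_of_ne (hu k).1 (Ne.symm (h0 k)), (hu k).2⟩
    have hsmall : ∀ k, u k ≤ δ := by
      intro k
      have : |u k| < δ := lt_of_le_of_lt (norm_le_pi_norm u k) hnorm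
      exact le_of_lt (lt_of_le_of_lt (le_abs_self _) this)
    rw [harch.1 u hmem]
    have hterm : ∀ k, φ δ ≤ φ (u k) := by
      intro k
      rcases eq_or_lt_of_le (hsmall k) with h | h
      · rw [h]
      · exact le_of_lt (hanti (hmem k) ⟨hδmem.1, le_of_lt hδmem.2⟩ h)
    have hsum : L ≤ ∑ k, φ (u k) := by
      have h1 : (d : ℝ) * φ δ ≤ ∑ k, φ (u k) := by
        calc (d : ℝ) * φ δ = ∑ _k : Fin d, φ δ := by
              rw [Finset.sum_const, Finset.card_univ, Fintype.card_fin, nsmul_eq_mul]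
          _ ≤ ∑ k, φ (u k) := Finset.sum_le_sum fun k _ => hterm k
      have h2 : (2 : ℝ) ≤ (d : ℝ) := by exact_mod_cast hd
      have hδpos : 0 < φ δ := hφpos δ ⟨hδmem.1, le_of_lt hδmem.2⟩ hδmem.2
      nlinarith
    have hset : {t | t ∈ Ioc (0:ℝ) 1 ∧ φ t ≤ ∑ k, φ (u k)} = Ioc (0:ℝ) 1 := by
      ext t
      exact ⟨fun h => h.1, fun h => ⟨h, le_trans (hle t h) hsum⟩⟩
    rw [geninv, hset, csInf_Ioc zero_lt_one]
  refine ⟨⟨δ, hδmem.1, key⟩, ?_, ?_⟩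
  · -- HasTDF C 0
    intro w hw
    have : ∀ᶠ s in nhdsWithin 0 (Ioi 0), C (fun k => s * w k) / s = 0 := by
      have hr : 0 < δ / (‖w‖ + 1) := by
        apply div_pos hδmem.1
        have := norm_nonneg w; linarith
      filter_upwards [Ioo_mem_nhdsGT_of_mem (⟨le_refl 0, hr⟩ : (0:ℝ) ∈ Ico 0 (δ / (‖w‖+1)))]
        with s hs
      have hwk : ∀ k, s * w k < δ := by
        intro k
        have h1 : w k ≤ ‖w‖ := le_trans (le_abs_self _) (norm_le_pi_norm w k)
        have h2 : s * w k ≤ s * ‖w‖ := mul_le_mul_of_nonneg_left h1 (le_of_lt hs.1)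
        have h3 : s * ‖w‖ < δ := by
          have h4 : s * (‖w‖ + 1) < δ := by
            have := (lt_div_iff₀ (by positivity : (0:ℝ) < ‖w‖ + 1)).mp hs.2
            linarith [this]
          nlinarith [hs.1]
        linarith
      have hmem : ∀ k, s * w k ∈ Icc (0:ℝ) 1 :=
        fun k => ⟨mul_nonneg (le_of_lt hs.1) (hw k), le_of_lt (lt_of_lt_of_le (hwk k) (le_of_lt hδmem.2))⟩
      have hnorm : ‖(fun k => s * w k)‖ < δ := by
        rcases Nat.eq_zero_or_pos d with hd0 | hd0
        · omega
        have : ∃ k : Fin d, True := ⟨⟨0, hd0⟩, trivial⟩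
        rw [pi_norm_lt_iff hδmem.1]
        intro k
        rw [Real.norm_eq_abs, abs_of_nonneg (hmem k).1]
        exact hwk k
      rw [key _ hmem hnorm, zero_div]
    exact Tendsto.congr' (this.mono fun s hs => hs.symm) tendsto_const_nhds
  · intro C' Λ' hC' hΛ'
    have hΛnn : ∀ w : Fin d → ℝ, (∀ k, 0 ≤ w k) → (0:ℝ) ≤ Λ' w := by
      intro w hw
      refine ge_of_tendsto (hΛ' w hw) ?_
      have hr : 0 < 1 / (‖w‖ + 1) := by positivity
      filter_upwards [Ioo_mem_nhdsGT_of_mem (⟨le_refl 0, hr⟩ : (0:ℝ) ∈ Ico 0 (1 / (‖w‖+1)))]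
        with s hs
      have hmem : ∀ k, s * w k ∈ Icc (0:ℝ) 1 := by
        intro k
        refine ⟨mul_nonneg (le_of_lt hs.1) (hw k), ?_⟩
        have h1 : w k ≤ ‖w‖ := le_trans (le_abs_self _) (norm_le_pi_norm w k)
        have h2 : s * w k ≤ s * ‖w‖ := mul_le_mul_of_nonneg_left h1 (le_of_lt hs.1)
        have h4 : s * (‖w‖ + 1) < 1 := by
          have := (lt_div_iff₀ (by positivity : (0:ℝ) < ‖w‖ + 1)).mp hs.2
          linarith
        nlinarith [hs.1]
      exact div_nonneg (hC'.1 _ hmem).1 (le_of_lt hs.1)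
    have hloc : ∃ ε : ℝ, 0 < ε ∧
        ∀ u : Fin d → ℝ, (∀ k, u k ∈ Icc (0:ℝ) 1) → ‖u‖ < ε → C u ≤ C' u := by
      refine ⟨δ, hδmem.1, fun u hu hn => ?_⟩
      rw [key u hu hn]
      exact (hC'.1 u hu).1
    exact ⟨⟨fun _ => hloc, fun _ => hΛnn⟩, hΛnn, hloc⟩
end

section
/- Let C1 and C2 be Archimedean d-copulas with strict generators φ1 and φ2, respectively. If the composition φ1 ∘ φ2^{−1} : [0,∞) → [0,∞) is subadditive near ∞ (i.e. there exists M ≥ 0 such that (φ1∘φ2^{−1})(x+y) ≤ (φ1∘φ2^{−1})(x) + (φ1∘φ2^{−1})(y) for all x, y ≥ M), then C1 ≤_loc C2, i.e. there exists ε > 0 such that C1(u) ≤ C2(u) for all u ∈ [0,1]^d with ‖u‖ < ε. -/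
open Filter Set

lemma gen_nonneg {φ : ℝ → ℝ} (h : IsGenerator φ) {t : ℝ} (ht : t ∈ Ioc (0:ℝ) 1) :
    0 ≤ φ t := by
  rcases eq_or_lt_of_le ht.2 with h1 | h1
  · rw [h1, h.2.2]
  · have := h.2.1 ht (⟨one_pos, le_refl 1⟩ : (1:ℝ) ∈ Ioc (0:ℝ) 1) h1
    rw [h.2.2] at this
    linarith

lemma gen_surj {φ : ℝ → ℝ} (h : IsStrictGenerator φ) {x : ℝ} (hx : 0 ≤ x) :
    ∃ t ∈ Ioc (0:ℝ) 1, φ t = x := by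
  have h1 : ∀ᶠ s in nhdsWithin 0 (Ioi 0), x ≤ φ s := h.2.eventually (eventually_ge_atTop x)
  have h2 : Ioo (0:ℝ) 1 ∈ nhdsWithin 0 (Ioi 0) :=
    Ioo_mem_nhdsGT_of_mem ⟨le_refl 0, one_pos⟩
  obtain ⟨s, hs1, hs2⟩ := (h1.and (eventually_of_mem h2 fun y hy => hy)).exists
  have hsub : Icc s 1 ⊆ Ioc (0:ℝ) 1 := fun y hy => ⟨lt_of_lt_of_le hs2.1 hy.1, hy.2⟩
  have hiv := intermediate_value_Icc' (le_of_lt hs2.2) (h.1.1.mono hsub)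
  have hxmem : x ∈ Icc (φ 1) (φ s) := ⟨by rw [h.1.2.2]; exact hx, hs1⟩
  obtain ⟨t, ht, htx⟩ := hiv hxmem
  exact ⟨t, hsub ht, htx⟩

lemma geninv_phi {φ : ℝ → ℝ} (h : IsGenerator φ) {t : ℝ} (ht : t ∈ Ioc (0:ℝ) 1) :
    geninv φ (φ t) = t := by
  unfold geninv
  have hmem : t ∈ {s | s ∈ Ioc (0:ℝ) 1 ∧ φ s ≤ φ t} := ⟨ht, le_rfl⟩
  apply le_antisymm
  · exact csInf_le ⟨0, fun s hs => le_of_lt hs.1.1⟩ hmem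
  · apply le_csInf ⟨t, hmem⟩
    rintro s ⟨hs, hle⟩
    by_contra hlt
    push_neg at hlt
    exact absurd hle (not_le.mpr (h.2.1 hs ht hlt))

lemma geninv_spec {φ : ℝ → ℝ} (h : IsStrictGenerator φ) {x : ℝ} (hx : 0 ≤ x) :
    geninv φ x ∈ Ioc (0:ℝ) 1 ∧ φ (geninv φ x) = x := by
  obtain ⟨t, ht, htx⟩ := gen_surj h hx
  rw [← htx, geninv_phi h.1 ht]
  exact ⟨ht, rfl⟩

lemma geninv_anti {φ : ℝ → ℝ} (h : IsStrictGenerator φ) {x y : ℝ} (hx : 0 ≤ x)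
    (hxy : x ≤ y) : geninv φ y ≤ geninv φ x := by
  obtain ⟨t, ht, htx⟩ := gen_surj h hx
  have hmem : t ∈ {s | s ∈ Ioc (0:ℝ) 1 ∧ φ s ≤ x} := ⟨ht, le_of_eq htx⟩
  apply csInf_le_csInf ⟨0, fun s hs => le_of_lt hs.1.1⟩ ⟨t, hmem⟩
  rintro s ⟨hs, hle⟩
  exact ⟨hs, hle.trans hxy⟩

lemma sum_subadd {ι : Type*} (f : ℝ → ℝ) (M : ℝ) (hM : 0 ≤ M)
    (hsub : ∀ x y : ℝ, M ≤ x → M ≤ y → f (x + y) ≤ f x + f y) (x : ι → ℝ) :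
    ∀ s : Finset ι, s.Nonempty → (∀ i ∈ s, M ≤ x i) →
      f (∑ i ∈ s, x i) ≤ ∑ i ∈ s, f (x i) := by
  intro s hs
  induction hs using Finset.Nonempty.cons_induction with
  | singleton a => intro _; simp
  | cons a s ha hs ih =>
    intro hx
    rw [Finset.sum_cons, Finset.sum_cons]
    have hsum : M ≤ ∑ i ∈ s, x i := by
      obtain ⟨i, hi⟩ := hs
      calc M ≤ x i := hx i (Finset.mem_cons_of_mem hi)
        _ ≤ ∑ i ∈ s, x i :=
          Finset.single_le_sum
            (fun j hj => hM.trans (hx j (Finset.mem_cons_of_mem hj))) hi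
    calc f (x a + ∑ i ∈ s, x i) ≤ f (x a) + f (∑ i ∈ s, x i) :=
          hsub _ _ (hx a (Finset.mem_cons_self _ _)) hsum
      _ ≤ f (x a) + ∑ i ∈ s, f (x i) := by
          linarith [ih (fun i hi => hx i (Finset.mem_cons_of_mem hi))]

/-- For Archimedean d-copulas with strict generators, if `φ1 ∘ φ2⁻¹` is
subadditive near `∞`, then `C1 ≤_loc C2`. -/
theorem stmt17 {d : ℕ} (C1 C2 : (Fin d → ℝ) → ℝ) (φ1 φ2 : ℝ → ℝ)
    (hC1 : IsCopula C1) (hC2 : IsCopula C2)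
    (hg1 : IsStrictGenerator φ1) (hg2 : IsStrictGenerator φ2)
    (ha1 : IsArchimedean C1 φ1) (ha2 : IsArchimedean C2 φ2)
    (hsub : ∃ M : ℝ, 0 ≤ M ∧ ∀ x y : ℝ, M ≤ x → M ≤ y →
      φ1 (geninv φ2 (x + y)) ≤ φ1 (geninv φ2 x) + φ1 (geninv φ2 y)) :
    ∃ ε : ℝ, 0 < ε ∧
      ∀ u : Fin d → ℝ, (∀ k, u k ∈ Icc (0:ℝ) 1) → ‖u‖ < ε → C1 u ≤ C2 u := by
  obtain ⟨M, hM0, hMsub⟩ := hsub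
  have hev : ∀ᶠ s in nhdsWithin 0 (Ioi 0), M ≤ φ2 s :=
    hg2.2.eventually (eventually_ge_atTop M)
  rw [eventually_nhdsWithin_iff, Metric.eventually_nhds_iff] at hev
  obtain ⟨δ, hδpos, hδ⟩ := hev
  refine ⟨δ, hδpos, fun u hu hnorm => ?_⟩
  by_cases hz : ∃ k, u k = 0
  · rw [ha1.2 u hu hz]
    exact (hC2.1 u hu).1
  push_neg at hz
  have hu' : ∀ k, u k ∈ Ioc (0:ℝ) 1 :=
    fun k => ⟨lt_of_le_of_ne (hu k).1 (Ne.symm (hz k)), (hu k).2⟩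
  rcases Nat.eq_zero_or_pos d with hd | hd
  · subst hd
    rw [ha1.1 u hu', ha2.1 u hu']
    have e1 : geninv φ1 0 = 1 := by
      rw [← hg1.1.2.2]; exact geninv_phi hg1.1 ⟨one_pos, le_rfl⟩
    have e2 : geninv φ2 0 = 1 := by
      rw [← hg2.1.2.2]; exact geninv_phi hg2.1 ⟨one_pos, le_rfl⟩
    simp [e1, e2]
  · haveI : Nonempty (Fin d) := Fin.pos_iff_nonempty.mp hd
    have hxM : ∀ k, M ≤ φ2 (u k) := by
      intro k
      apply hδ _ (hu' k).1
      have h1 : dist (u k) 0 = |u k| := by simp [Real.dist_eq]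
      have h2 : |u k| ≤ ‖u‖ := by
        rw [← Real.norm_eq_abs]; exact norm_le_pi_norm u k
      rw [h1]; exact lt_of_le_of_lt h2 hnorm
    have hx0 : ∀ k, (0:ℝ) ≤ φ2 (u k) := fun k => hM0.trans (hxM k)
    have hsum0 : (0:ℝ) ≤ ∑ k, φ2 (u k) := Finset.sum_nonneg fun k _ => hx0 k
    rw [ha2.1 u hu', ha1.1 u hu']
    obtain ⟨hmem2, hval2⟩ := geninv_spec hg2 hsum0
    have key : φ1 (geninv φ2 (∑ k, φ2 (u k))) ≤ ∑ k, φ1 (u k) := by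
      have hsa := sum_subadd (fun z => φ1 (geninv φ2 z)) M hM0 hMsub
        (fun k => φ2 (u k)) Finset.univ Finset.univ_nonempty (fun i _ => hxM i)
      calc φ1 (geninv φ2 (∑ k, φ2 (u k)))
          ≤ ∑ k, φ1 (geninv φ2 (φ2 (u k))) := hsa
        _ = ∑ k, φ1 (u k) := by
            refine Finset.sum_congr rfl fun k _ => ?_
            rw [geninv_phi hg2.1 (hu' k)]
    have hφ1v : 0 ≤ φ1 (geninv φ2 (∑ k, φ2 (u k))) := gen_nonneg hg1.1 hmem2
    calc geninv φ1 (∑ k, φ1 (u k))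
        ≤ geninv φ1 (φ1 (geninv φ2 (∑ k, φ2 (u k)))) := geninv_anti hg1 hφ1v key
      _ = geninv φ2 (∑ k, φ2 (u k)) := geninv_phi hg1.1 hmem2
end

section
/- Let φ1 and φ2 be strict generators (continuous, strictly decreasing functions φ_i : [0,1] → [0,∞] with φ_i(1) = 0 and lim_{s↓0} φ_i(s) = ∞). If there exists ε > 0 such that s ↦ φ1(s)/φ2(s) is increasing on (0, ε), then φ1 ∘ φ2^{−1} is subadditive near ∞, i.e. there exists M ≥ 0 such that (φ1∘φ2^{−1})(x+y) ≤ (φ1∘φ2^{−1})(x) + (φ1∘φ2^{−1})(y) for all x, y ≥ M. -/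
open Filter Set

/-! With `ψ = φ1 ∘ φ2⁻¹` we have `ψ x / x = (φ1 / φ2)(φ2⁻¹ x)`. Since `φ2⁻¹` decreases to `0`,
the monotonicity of `φ1 / φ2` near `0` makes `ψ x / x` antitone for large `x`, and a function
whose quotient by `x` is antitone is subadditive. -/

theorem apply_add_le_of_antitoneOn_div {f : ℝ → ℝ} {M : ℝ} (hM : 0 < M)
    (hf : AntitoneOn (fun x => f x / x) (Ici M)) {x y : ℝ} (hx : M ≤ x) (hy : M ≤ y) :
    f (x + y) ≤ f x + f y := by
  have hx0 : 0 < x := hM.trans_le hx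
  have hy0 : 0 < y := hM.trans_le hy
  have hxy : M ≤ x + y := by linarith
  calc f (x + y) = x * (f (x + y) / (x + y)) + y * (f (x + y) / (x + y)) := by
        field_simp
    _ ≤ x * (f x / x) + y * (f y / y) := by
        have hfx : f (x + y) / (x + y) ≤ f x / x := hf hx hxy (by linarith)
        have hfy : f (x + y) / (x + y) ≤ f y / y := hf hy hxy (by linarith)
        gcongr
    _ = f x + f y := by field_simp

theorem geninv_apply_eq {φ : ℝ → ℝ} (hφ : StrictAntiOn φ (Ioc 0 1)) {c : ℝ}
    (hc : c ∈ Ioc 0 1) : geninv φ (φ c) = c := by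
  have hmem : c ∈ {t | t ∈ Ioc (0:ℝ) 1 ∧ φ t ≤ φ c} := ⟨hc, le_rfl⟩
  refine le_antisymm (csInf_le ⟨0, fun t ht => ht.1.1.le⟩ hmem) (le_csInf ⟨c, hmem⟩ ?_)
  exact fun t ⟨ht, hle⟩ => (hφ.le_iff_ge ht hc).1 hle

theorem geninv_antitoneOn {φ : ℝ → ℝ} (h1 : φ 1 = 0) : AntitoneOn (geninv φ) (Ici 0) := by
  intro x hx y _ hxy
  refine csInf_le_csInf ⟨0, fun t ht => ht.1.1.le⟩ ⟨1, ⟨⟨one_pos, le_rfl⟩, ?_⟩⟩ ?_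
  · rw [h1]; exact hx
  · exact fun t ⟨ht, hle⟩ => ⟨ht, hle.trans hxy⟩

namespace IsStrictGenerator

variable {φ : ℝ → ℝ}

theorem surjOn (hφ : IsStrictGenerator φ) : SurjOn φ (Ioc 0 1) (Ici 0) := by
  obtain ⟨⟨hcont, -, h1⟩, htop⟩ := hφ
  intro x (hx : 0 ≤ x)
  obtain ⟨a, hxa, ha⟩ : ∃ a, x < φ a ∧ a ∈ Ioo (0:ℝ) 1 :=
    ((htop.eventually (eventually_gt_atTop x)).and
      (Ioo_mem_nhdsGT (zero_lt_one' ℝ))).exists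
  have hsub : Icc a 1 ⊆ Ioc 0 1 := fun t ht => ⟨ha.1.trans_le ht.1, ht.2⟩
  obtain ⟨c, hc, hcx⟩ := intermediate_value_Icc' ha.2.le (hcont.mono hsub)
    ⟨h1.symm ▸ hx, hxa.le⟩
  exact ⟨c, hsub hc, hcx⟩

theorem geninv_mem (hφ : IsStrictGenerator φ) {x : ℝ} (hx : 0 ≤ x) :
    geninv φ x ∈ Ioc 0 1 := by
  obtain ⟨c, hc, rfl⟩ := hφ.surjOn hx
  rwa [geninv_apply_eq hφ.1.2.1 hc]

theorem apply_geninv (hφ : IsStrictGenerator φ) {x : ℝ} (hx : 0 ≤ x) :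
    φ (geninv φ x) = x := by
  obtain ⟨c, hc, rfl⟩ := hφ.surjOn hx
  rw [geninv_apply_eq hφ.1.2.1 hc]

end IsStrictGenerator

theorem stmt18_general (φ1 φ2 : ℝ → ℝ)
    (hg2 : IsStrictGenerator φ2)
    (hmono : ∃ ε : ℝ, 0 < ε ∧ MonotoneOn (fun s => φ1 s / φ2 s) (Ioo (0:ℝ) ε)) :
    ∃ M : ℝ, 0 ≤ M ∧ ∀ x y : ℝ, M ≤ x → M ≤ y →
      φ1 (geninv φ2 (x + y)) ≤ φ1 (geninv φ2 x) + φ1 (geninv φ2 y) := by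
  obtain ⟨ε, hε, hmono⟩ := hmono
  obtain ⟨s₀, hs₀, hs₀ε⟩ := exists_between (lt_min hε one_pos)
  have hs₀I : s₀ ∈ Ioc (0:ℝ) 1 := ⟨hs₀, (hs₀ε.trans_le (min_le_right _ _)).le⟩
  have hM : 0 < φ2 s₀ := by
    simpa [hg2.1.2.2] using hg2.1.2.1 hs₀I ⟨one_pos, le_rfl⟩ (hs₀ε.trans_le (min_le_right _ _))
  have hanti : AntitoneOn (geninv φ2) (Ici (φ2 s₀)) :=
    (geninv_antitoneOn hg2.1.2.2).mono (Ici_subset_Ici.2 hM.le)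
  have hmaps : MapsTo (geninv φ2) (Ici (φ2 s₀)) (Ioo 0 ε) := by
    intro x hx
    have hle : geninv φ2 x ≤ s₀ :=
      geninv_apply_eq hg2.1.2.1 hs₀I ▸ hanti (mem_Ici.2 le_rfl) hx hx
    exact ⟨(hg2.geninv_mem (hM.le.trans hx)).1, hle.trans_lt (hs₀ε.trans_le (min_le_left _ _))⟩
  have hratio : AntitoneOn (fun x => φ1 (geninv φ2 x) / x) (Ici (φ2 s₀)) :=
    (hmono.comp_AntitoneOn hanti hmaps).congr fun x hx => by
      simp only [Function.comp_apply, hg2.apply_geninv (hM.le.trans hx)]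
  exact ⟨φ2 s₀, hM.le, fun x y hx hy => apply_add_le_of_antitoneOn_div hM hratio hx hy⟩

/-- If `φ1(s)/φ2(s)` is increasing on some `(0, ε)`, then `φ1 ∘ φ2⁻¹` is
subadditive near `∞`. -/
theorem stmt18 (φ1 φ2 : ℝ → ℝ)
    (hg1 : IsStrictGenerator φ1) (hg2 : IsStrictGenerator φ2)
    (hmono : ∃ ε : ℝ, 0 < ε ∧ MonotoneOn (fun s => φ1 s / φ2 s) (Ioo (0:ℝ) ε)) :
    ∃ M : ℝ, 0 ≤ M ∧ ∀ x y : ℝ, M ≤ x → M ≤ y →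
      φ1 (geninv φ2 (x + y)) ≤ φ1 (geninv φ2 x) + φ1 (geninv φ2 y) :=
  stmt18_general φ1 φ2 hg2 hmono
end
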